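/- arXiv:math/0307271 — 8 statements merged into one kernel-verified Lean document; each statement's English description precedes it below -/
import Mathlib

section
/- The Eulerian number E(k,n), counting permutations of {1,...,n} with exactly k weak excedences, satisfies E(k,n) = ∑_{i=0}^{k} (-1)^i * C(n+1, i) * (k-i)^n. -/
/-!
Inserting the new largest point `n` into a permutation `σ` of `Fin n`, so that `n ↦ j` and
`σ⁻¹ j ↦ n`, is a bijection `Fin (n + 1) × Perm (Fin n) ≃ Perm (Fin (n + 1))`, and it adds exactly
one position, the one now sent to `n`, to the weak excedence set of `σ`. If `σ` has `w` weak
excedences, `w` choices of `j` keep that count and `n + 1 - w` raise it by one, whence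
`E(k+1, n+1) = (k+1) E(k+1, n) + (n+1-k) E(k, n)`. The alternating sum satisfies the same
recurrence term by term (Pascal's rule and `(i+1) C(m, i+1) = (m-i) C(m, i)`) and has the same
initial values.
-/

def weakExcedences {n : ℕ} (π : Equiv.Perm (Fin n)) : ℕ :=
  (Finset.univ.filter fun i : Fin n => i ≤ π i).card

open Finset Equiv

section Insertion

variable {n : ℕ}

def weakExcedenceSet (π : Perm (Fin n)) : Finset (Fin n) := {i | i ≤ π i}

lemma card_weakExcedenceSet (π : Perm (Fin n)) : #(weakExcedenceSet π) = weakExcedences π := rfl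

lemma weakExcedences_le (π : Perm (Fin n)) : weakExcedences π ≤ n :=
  (card_filter_le _ _).trans_eq (card_fin n)

lemma weakExcedences_pos (π : Perm (Fin (n + 1))) : 0 < weakExcedences π :=
  card_pos.2 ⟨π.symm (Fin.last n), by simp [Fin.le_last]⟩

def extendLast (σ : Perm (Fin n)) : Perm (Fin (n + 1)) :=
  finSuccEquivLast.symm.permCongr σ.optionCongr

@[simp] lemma extendLast_castSucc (σ : Perm (Fin n)) (i : Fin n) :
    extendLast σ i.castSucc = (σ i).castSucc := by
  simp [extendLast, finSuccEquivLast_castSucc, finSuccEquivLast_symm_some]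

@[simp] lemma extendLast_last (σ : Perm (Fin n)) : extendLast σ (Fin.last n) = Fin.last n := by
  simp [extendLast, finSuccEquivLast_last]

def insertLast : Fin (n + 1) × Perm (Fin n) ≃ Perm (Fin (n + 1)) :=
  (finSuccEquivLast.prodCongr (Equiv.refl _)).trans <|
    Perm.decomposeOption.symm.trans finSuccEquivLast.symm.permCongr

lemma insertLast_apply (j : Fin (n + 1)) (σ : Perm (Fin n)) :
    insertLast (j, σ) = swap (Fin.last n) j * extendLast σ := by
  ext x
  simp [insertLast, extendLast, finSuccEquivLast.symm.injective.map_swap]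

lemma weakExcedenceSet_insertLast (j : Fin (n + 1)) (σ : Perm (Fin n)) :
    weakExcedenceSet (insertLast (j, σ))
      = insert ((extendLast σ).symm j) ((weakExcedenceSet σ).map Fin.castSuccEmb) := by
  ext x
  simp only [weakExcedenceSet, insertLast_apply, Perm.mul_apply, mem_insert, mem_map, mem_filter,
    mem_univ, true_and, Fin.castSuccEmb_apply, eq_symm_apply]
  rcases Fin.eq_castSucc_or_eq_last x with ⟨i, rfl⟩ | rfl
  · rw [extendLast_castSucc]
    by_cases hi : (σ i).castSucc = j
    · simp [hi, Fin.le_last]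
    · rw [swap_apply_of_ne_of_ne (Fin.castSucc_lt_last _).ne hi]
      simp [hi]
  · simp [Fin.castSucc_ne_last, Fin.last_le_iff, eq_comm]

lemma weakExcedences_insertLast (j : Fin (n + 1)) (σ : Perm (Fin n)) :
    weakExcedences (insertLast (j, σ)) = weakExcedences σ +
      if (extendLast σ).symm j ∈ (weakExcedenceSet σ).map Fin.castSuccEmb then 0 else 1 := by
  rw [← card_weakExcedenceSet, weakExcedenceSet_insertLast, card_insert_eq_ite, card_map,
    card_weakExcedenceSet]
  split_ifs <;> rfl

lemma card_weakExcedences_insertLast_eq_succ (σ : Perm (Fin n)) (k : ℕ) :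
    #{j | weakExcedences (insertLast (j, σ)) = k + 1}
      = (if weakExcedences σ = k + 1 then k + 1 else 0)
        + if weakExcedences σ = k then n + 1 - k else 0 := by
  set w := weakExcedences σ
  set S := (weakExcedenceSet σ).map Fin.castSuccEmb
  have hS : #S = w := card_map _
  have hSc : #Sᶜ = n + 1 - w := by rw [card_compl, hS, Fintype.card_fin]
  have hin : ∀ x ∈ S, (if w + (if x ∈ S then 0 else 1) = k + 1 then 1 else 0)
      = if w = k + 1 then 1 else 0 := fun x hx => by simp [hx]
  have hout : ∀ x ∈ Sᶜ, (if w + (if x ∈ S then 0 else 1) = k + 1 then 1 else 0)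
      = if w = k then 1 else 0 := fun x hx => by simp [mem_compl.1 hx]
  simp_rw [card_filter, weakExcedences_insertLast]
  rw [(extendLast σ).symm.sum_comp fun x => if w + (if x ∈ S then 0 else 1) = k + 1 then 1 else 0,
    ← sum_add_sum_compl S, sum_congr rfl hin, sum_congr rfl hout, sum_const, sum_const, hS, hSc]
  split_ifs <;> simp_all

end Insertion

def eulerian (n k : ℕ) : ℕ := #{π : Perm (Fin n) | weakExcedences π = k}

lemma eulerian_succ_succ (n k : ℕ) :
    eulerian (n + 1) (k + 1) = (k + 1) * eulerian n (k + 1) + (n + 1 - k) * eulerian n k := by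
  have hsplit : eulerian (n + 1) (k + 1)
      = ∑ σ : Perm (Fin n), #{j | weakExcedences (insertLast (j, σ)) = k + 1} := by
    simp_rw [eulerian, card_filter]
    rw [← insertLast.sum_comp, Fintype.sum_prod_type_right]
  simp_rw [hsplit, card_weakExcedences_insertLast_eq_succ, sum_add_distrib, ← sum_filter, sum_const,
    smul_eq_mul, eulerian, mul_comm]

lemma eulerian_eq_zero_of_lt {n k : ℕ} (h : n < k) : eulerian n k = 0 := by
  rw [eulerian, card_eq_zero, filter_eq_empty_iff]
  exact fun π _ => ((weakExcedences_le π).trans_lt h).ne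

lemma eulerian_succ_zero (n : ℕ) : eulerian (n + 1) 0 = 0 := by
  rw [eulerian, card_eq_zero, filter_eq_empty_iff]
  exact fun π _ => (weakExcedences_pos π).ne'

lemma eulerian_zero_left (k : ℕ) : eulerian 0 k = if k = 0 then 1 else 0 := by
  have h : ∀ π : Perm (Fin 0), weakExcedences π = 0 := fun π => by simp [weakExcedences]
  simp [eulerian, h, eq_comm, apply_ite card]

def eulerianSum (n k : ℕ) : ℤ :=
  ∑ i ∈ range (k + 1), (-1) ^ i * ((n + 1).choose i : ℤ) * ((k - i : ℕ) : ℤ) ^ n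

lemma eulerianSum_zero_left (k : ℕ) : eulerianSum 0 k = if k = 0 then 1 else 0 := by
  rcases k with _ | k
  · simp [eulerianSum]
  · simp [eulerianSum, sum_range_succ', Nat.choose_eq_zero_of_lt]

lemma eulerianSum_succ_zero (n : ℕ) : eulerianSum (n + 1) 0 = 0 := by
  simp [eulerianSum]

lemma choose_succ_mul_eq (m i : ℕ) :
    (m.choose (i + 1) : ℤ) * (i + 1) = m.choose i * ((m : ℤ) - i) := by
  rcases le_or_gt i m with h | h
  · rw [← Nat.cast_sub h]
    exact_mod_cast Nat.choose_succ_right_eq m i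
  · simp [Nat.choose_eq_zero_of_lt h, Nat.choose_eq_zero_of_lt (h.trans i.lt_succ_self)]

lemma choose_add_two_mul_sub (n i : ℕ) (x : ℤ) :
    ((n + 2).choose (i + 1) : ℤ) * (x - i)
      = (x + 1) * (n + 1).choose (i + 1) - ((n : ℤ) + 1 - x) * (n + 1).choose i := by
  have hpascal : ((n + 2).choose (i + 1) : ℤ) = (n + 1).choose i + (n + 1).choose (i + 1) := by
    exact_mod_cast Nat.choose_succ_succ (n + 1) i
  have := choose_succ_mul_eq (n + 1) i
  push_cast at this
  rw [hpascal]
  linear_combination -this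

lemma eulerianSum_succ_succ (n k : ℕ) :
    eulerianSum (n + 1) (k + 1)
      = ((k : ℤ) + 1) * eulerianSum n (k + 1) + ((n : ℤ) + 1 - k) * eulerianSum n k := by
  have hterm : ∀ i ∈ range (k + 1),
      (-1) ^ (i + 1) * ((n + 1 + 1).choose (i + 1) : ℤ) * ((k + 1 - (i + 1) : ℕ) : ℤ) ^ (n + 1)
        = ((k : ℤ) + 1) * ((-1) ^ (i + 1) * ((n + 1).choose (i + 1) : ℤ)
            * ((k + 1 - (i + 1) : ℕ) : ℤ) ^ n)
          + ((n : ℤ) + 1 - k) * ((-1) ^ i * ((n + 1).choose i : ℤ) * ((k - i : ℕ) : ℤ) ^ n) := by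
    intro i hi
    have hki : i ≤ k := Nat.lt_succ_iff.1 (mem_range.1 hi)
    rw [Nat.add_sub_add_right, Nat.cast_sub hki]
    linear_combination (-1) ^ (i + 1) * ((k : ℤ) - i) ^ n * choose_add_two_mul_sub n i k
  rw [eulerianSum, sum_range_succ', sum_congr rfl hterm, sum_add_distrib, ← mul_sum, ← mul_sum,
    eulerianSum, sum_range_succ' _ (k + 1), eulerianSum]
  simp only [Nat.choose_zero_right]
  push_cast
  ring

lemma cast_eulerian_succ_succ (n k : ℕ) :
    (eulerian (n + 1) (k + 1) : ℤ)
      = ((k : ℤ) + 1) * eulerian n (k + 1) + ((n : ℤ) + 1 - k) * eulerian n k := by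
  rw [eulerian_succ_succ]
  -- for `k > n + 1` the truncated `n + 1 - k` is wrong, but then `eulerian n k = 0`
  rcases le_or_gt k (n + 1) with h | h
  · push_cast [Nat.cast_sub h]
    ring
  · simp [eulerian_eq_zero_of_lt (Nat.lt_of_succ_lt h)]

theorem cast_eulerian_eq_eulerianSum (n k : ℕ) : (eulerian n k : ℤ) = eulerianSum n k := by
  induction n generalizing k with
  | zero => rw [eulerian_zero_left, eulerianSum_zero_left]; split_ifs <;> rfl
  | succ n ih =>
    rcases k with _ | k
    · rw [eulerian_succ_zero, eulerianSum_succ_zero, Nat.cast_zero]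
    · rw [cast_eulerian_succ_succ, eulerianSum_succ_succ, ih, ih]

theorem eulerian_explicit_formula_general (n k : ℕ) :
    (Nat.card {π : Equiv.Perm (Fin n) // weakExcedences π = k} : ℤ) =
      ∑ i ∈ Finset.range (k + 1),
        (-1 : ℤ) ^ i * ((n + 1).choose i : ℤ) * ((k - i : ℕ) : ℤ) ^ n := by
  rw [Nat.card_eq_fintype_card, Fintype.card_subtype]
  exact cast_eulerian_eq_eulerianSum n k

/-- The Eulerian number `E(k,n)`, counting permutations of `{1,…,n}` with exactly `k`
weak excedences, satisfies `E(k,n) = ∑_{i=0}^{k} (-1)^i * C(n+1, i) * (k-i)^n`. -/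
theorem eulerian_explicit_formula (n k : ℕ) (hk : 1 ≤ k) (hkn : k ≤ n) :
    (Nat.card {π : Equiv.Perm (Fin n) // weakExcedences π = k} : ℤ) =
      ∑ i ∈ Finset.range (k + 1),
        (-1 : ℤ) ^ i * ((n + 1).choose i : ℤ) * ((k - i : ℕ) : ℤ) ^ n :=
  eulerian_explicit_formula_general n k
end

section
/- Define A_{k,n}(q) = ∑_{i=0}^{k-1} (-1)^i * C(n,i) * q^{-(k-i)^2} * ([i-k]^i * [k-i+1]^{n-i} - [i-k+1]^i * [k-i]^{n-i}), where [m] denotes (1-q^m)/(1-q) as a rational function (for possibly negative m interpreted formally). Then A_{k,n}(-1) evaluates so that ∑_{k=1}^n A_{k,n}(-1) = n, i.e., A_{k,n}(-1) = 1 for each 1 ≤ k ≤ n. -/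
/-!
At `q = -1` the `q`-integer `[m]` is `0` for even `m` and `1` for odd `m`. In the term of index
`i` both products pair `[m]` with `[1 - m]`, which have opposite parities, so for `0 < i < n`
each product vanishes. Only the term `i = 0` survives, and it equals
`(-1)^k ([k + 1]^n - [k]^n) = 1` by a parity check on `k`.
-/

/-- The `q`-integer `[m] = (1 - q^m)/(1 - q)` (for a possibly negative integer `m`),
evaluated at `q = -1`. -/
noncomputable def qintNegOne (m : ℤ) : ℚ :=
  (1 - (-1 : ℚ) ^ m) / (1 - (-1 : ℚ))

lemma qintNegOne_of_even {m : ℤ} (hm : Even m) : qintNegOne m = 0 := by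
  simp [qintNegOne, hm.neg_one_zpow]

lemma qintNegOne_of_odd {m : ℤ} (hm : Odd m) : qintNegOne m = 1 := by
  rw [qintNegOne, hm.neg_one_zpow]
  norm_num

lemma qintNegOne_mul_qintNegOne_one_sub (m : ℤ) : qintNegOne m * qintNegOne (1 - m) = 0 := by
  rcases Int.even_or_odd m with hm | hm
  · rw [qintNegOne_of_even hm, zero_mul]
  · rw [qintNegOne_of_even (odd_one.sub_odd hm), mul_zero]

lemma pow_mul_pow_eq_zero_of_mul_eq_zero {M : Type*} [CommMonoidWithZero M] {a b : M}
    (hab : a * b = 0) {i j : ℕ} (hi : i ≠ 0) (hj : j ≠ 0) : a ^ i * b ^ j = 0 := by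
  obtain ⟨i, rfl⟩ := Nat.exists_eq_succ_of_ne_zero hi
  obtain ⟨j, rfl⟩ := Nat.exists_eq_succ_of_ne_zero hj
  rw [pow_succ, pow_succ, mul_mul_mul_comm, hab, mul_zero]

lemma neg_one_zpow_neg_sq_mul_sub_eq_one (k : ℤ) {n : ℕ} (hn : n ≠ 0) :
    (-1 : ℚ) ^ (-(k ^ 2)) * (qintNegOne (k + 1) ^ n - qintNegOne k ^ n) = 1 := by
  rcases Int.even_or_odd k with hk | hk
  · rw [(hk.pow_of_ne_zero two_ne_zero).neg.neg_one_zpow, qintNegOne_of_odd hk.add_one,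
      qintNegOne_of_even hk]
    simp [hn]
  · rw [(hk.pow (n := 2)).neg.neg_one_zpow, qintNegOne_of_even hk.add_one,
      qintNegOne_of_odd hk]
    simp [hn]

/-- Substituting `q = -1` in
`A_{k,n}(q) = ∑_{i=0}^{k-1} (-1)^i C(n,i) q^{-(k-i)²} ([i-k]^i [k-i+1]^{n-i} - [i-k+1]^i [k-i]^{n-i})`
yields `1` for every `1 ≤ k ≤ n`; in particular `∑_{k=1}^n A_{k,n}(-1) = n`
(the Euler-characteristic statement for `Gr(k,n)⁺`). -/
theorem A_kn_at_neg_one (n k : ℕ) (hk : 1 ≤ k) (hkn : k ≤ n) :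
    ∑ i ∈ Finset.range k,
      (-1 : ℚ) ^ i * (n.choose i : ℚ) * (-1 : ℚ) ^ (-(((k : ℤ) - i) ^ 2)) *
        (qintNegOne ((i : ℤ) - k) ^ i * qintNegOne ((k : ℤ) - i + 1) ^ (n - i) -
          qintNegOne ((i : ℤ) - k + 1) ^ i * qintNegOne ((k : ℤ) - i) ^ (n - i)) = 1 := by
  rw [Finset.sum_eq_single_of_mem 0 (Finset.mem_range.mpr hk)]
  · simpa using neg_one_zpow_neg_sq_mul_sub_eq_one k (n := n) (by omega)
  · intro i hi hi0
    have hni : n - i ≠ 0 := by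
      have := Finset.mem_range.mp hi
      omega
    have h₁ : qintNegOne ((i : ℤ) - k) * qintNegOne ((k : ℤ) - i + 1) = 0 := by
      convert qintNegOne_mul_qintNegOne_one_sub ((i : ℤ) - k) using 3
      ring
    have h₂ : qintNegOne ((i : ℤ) - k + 1) * qintNegOne ((k : ℤ) - i) = 0 := by
      rw [mul_comm]
      convert qintNegOne_mul_qintNegOne_one_sub ((k : ℤ) - i) using 3
      ring
    rw [pow_mul_pow_eq_zero_of_mul_eq_zero h₁ hi0 hni,
      pow_mul_pow_eq_zero_of_mul_eq_zero h₂ hi0 hni, sub_zero, mul_zero]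
end

section
/- The generating polynomial F_λ(q) counting Le-fillings of the Young diagram of λ = (λ_1,...,λ_k) (all λ_i ≥ 1) by number of 1's satisfies the recurrence F_λ(q) = q·F_{(λ_1,...,λ_{k-1},λ_k−1)}(q) + F_{(λ_1,...,λ_{k-1})}(q) + F_{(λ_1−1,...,λ_k−1)}(q) − F_{(λ_1−1,...,λ_{k-1}−1)}(q). -/
/-- `D` is a Le-filling of the Young diagram with row lengths `lam` (rows indexed
top-to-bottom by `Fin k`): there is no `0` in some box having simultaneously a `1`
above it in its column and a `1` to its left in its row.  Equivalently: whenever a box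
`(i,j)` has a `1` above it (row `i' < i`, same column `j`) and a `1` to its left
(same row `i`, column `j' < j`), the box `(i,j)` itself contains a `1`. -/
def IsLeFilling {k : ℕ} (lam : Fin k → ℕ) (D : ∀ i : Fin k, Fin (lam i) → Bool) : Prop :=
  ∀ (i i' : Fin k) (j j' : ℕ) (hj : j < lam i) (hj' : j' < lam i) (hji' : j < lam i'),
    i' < i → j' < j → D i' ⟨j, hji'⟩ = true → D i ⟨j', hj'⟩ = true → D i ⟨j, hj⟩ = true

/-- The number of `1`'s in a filling. -/
def onesCount {k : ℕ} (lam : Fin k → ℕ) (D : ∀ i : Fin k, Fin (lam i) → Bool) : ℕ :=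
  ∑ i : Fin k, (Finset.univ.filter fun j : Fin (lam i) => D i j = true).card

/-- `leF lam r` is the number of Le-fillings of the Young diagram with row lengths `lam`
having exactly `r` ones, i.e. the coefficient of `q^r` in `F_λ(q)`. -/
noncomputable def leF {k : ℕ} (lam : Fin k → ℕ) (r : ℕ) : ℕ :=
  Nat.card {D : ∀ i : Fin k, Fin (lam i) → Bool // IsLeFilling lam D ∧ onesCount lam D = r}

/-!
Split the Le-fillings of `λ` by the entry of the corner `(k, λ_k - 1)`, the last cell of the
last row. If it is `1`, erasing it leaves a Le-filling of the diagram without that corner, with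
one `1` fewer. If it is `0`, then either the last row or the corner's column is all `0`: a `1`
above the corner together with a `1` to its left would force a `1` at the corner. Since `λ` is
a partition, the corner's column meets every row, and deleting this column, which is all `0`,
gives a Le-filling of `(λ_1 - 1, …, λ_k - 1)`; deleting the last row, which is all `0`, gives
one of `(λ_1, …, λ_{k-1})`, and deleting both gives one of `(λ_1 - 1, …, λ_{k-1} - 1)`.
Inclusion–exclusion over the two cases gives the last three terms.
-/

namespace LeFilling

open Finset

/- A filling is encoded by the finite set of cells holding a `1`. Cells live in `ℕ × ℕ` and row
lengths are a function `l : ℕ → ℕ`, so that deleting a row or a column needs no reindexing. -/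
def shape (n : ℕ) (l : ℕ → ℕ) : Finset (ℕ × ℕ) :=
  (range n).biUnion fun i => (range (l i)).image (i, ·)

@[simp]
theorem mem_shape {n : ℕ} {l : ℕ → ℕ} {p : ℕ × ℕ} : p ∈ shape n l ↔ p.1 < n ∧ p.2 < l p.1 := by
  obtain ⟨a, b⟩ := p
  simp [shape]

def IsLeSet (l : ℕ → ℕ) (S : Finset (ℕ × ℕ)) : Prop :=
  ∀ ⦃i' i j' j : ℕ⦄, i' < i → j' < j → j < l i → (i', j) ∈ S → (i, j') ∈ S → (i, j) ∈ S

open Classical in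
noncomputable def leFillings (n : ℕ) (l : ℕ → ℕ) (r : ℕ) : Finset (Finset (ℕ × ℕ)) :=
  (shape n l).powerset.filter fun S => IsLeSet l S ∧ S.card = r

theorem mem_leFillings {n : ℕ} {l : ℕ → ℕ} {r : ℕ} {S : Finset (ℕ × ℕ)} :
    S ∈ leFillings n l r ↔ S ⊆ shape n l ∧ IsLeSet l S ∧ S.card = r := by
  simp [leFillings]

variable {l : ℕ → ℕ}

section FinEncoding

variable {k : ℕ} (lam : Fin k → ℕ)

def cellEmb : (Σ i : Fin k, Fin (lam i)) ↪ ℕ × ℕ where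
  toFun x := (x.1, x.2)
  inj' := by
    rintro ⟨i, j⟩ ⟨i', j'⟩ h
    obtain ⟨hi, hj⟩ := Prod.ext_iff.mp h
    obtain rfl := Fin.ext hi
    exact congrArg _ (Fin.ext hj)

def ones (D : ∀ i : Fin k, Fin (lam i) → Bool) : Finset (ℕ × ℕ) :=
  (univ.sigma fun i => univ.filter fun j => D i j = true).map (cellEmb lam)

def ofCells (S : Finset (ℕ × ℕ)) (i : Fin k) (j : Fin (lam i)) : Bool :=
  decide ((i.1, j.1) ∈ S)

variable {lam}

theorem mem_ones {D : ∀ i : Fin k, Fin (lam i) → Bool} {p : ℕ × ℕ} :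
    p ∈ ones lam D ↔ ∃ (i : Fin k) (j : Fin (lam i)), D i j = true ∧ (i.1, j.1) = p := by
  simp only [ones, mem_map, mem_sigma, mem_univ, mem_filter, true_and, Sigma.exists]
  rfl

theorem card_ones (D : ∀ i : Fin k, Fin (lam i) → Bool) : (ones lam D).card = onesCount lam D := by
  simp [ones, onesCount, card_sigma]

theorem val_mem_ones {D : ∀ i : Fin k, Fin (lam i) → Bool} {i : Fin k} {j : Fin (lam i)} :
    ((i : ℕ), (j : ℕ)) ∈ ones lam D ↔ D i j = true :=
  (mem_map' (cellEmb lam) (a := ⟨i, j⟩)).trans (by simp)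

theorem ofCells_ones (D : ∀ i : Fin k, Fin (lam i) → Bool) : ofCells lam (ones lam D) = D := by
  funext i j
  simp [ofCells, val_mem_ones]

theorem ones_subset_shape (hl : ∀ i : Fin k, l i = lam i) (D : ∀ i : Fin k, Fin (lam i) → Bool) :
    ones lam D ⊆ shape k l := by
  intro p hp
  obtain ⟨i, j, -, rfl⟩ := mem_ones.mp hp
  simp [hl i]

theorem ones_ofCells (hl : ∀ i : Fin k, l i = lam i) {S : Finset (ℕ × ℕ)} (hS : S ⊆ shape k l) :
    ones lam (ofCells lam S) = S := by
  ext ⟨a, b⟩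
  simp only [mem_ones, ofCells, decide_eq_true_eq]
  constructor
  · rintro ⟨i, j, h, hp⟩
    rwa [← hp]
  · intro h
    obtain ⟨ha, hb⟩ := mem_shape.mp (hS h)
    exact ⟨⟨a, ha⟩, ⟨b, by simpa [← hl] using hb⟩, h, rfl⟩

theorem isLeFilling_ofCells_iff (hl : ∀ i : Fin k, l i = lam i) {S : Finset (ℕ × ℕ)}
    (hS : S ⊆ shape k l) : IsLeFilling lam (ofCells lam S) ↔ IsLeSet l S := by
  simp only [IsLeFilling, IsLeSet, ofCells, decide_eq_true_eq]
  constructor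
  · intro h i' i j' j hi hj hjl hi'j hij'
    have hik : i < k := (mem_shape.mp (hS hij')).1
    have hj'l : j' < l i := (mem_shape.mp (hS hij')).2
    have hjl' : j < l i' := (mem_shape.mp (hS hi'j)).2
    have hli : l i = lam ⟨i, hik⟩ := hl ⟨i, hik⟩
    have hli' : l i' = lam ⟨i', hi.trans hik⟩ := hl ⟨i', hi.trans hik⟩
    exact h ⟨i, hik⟩ ⟨i', hi.trans hik⟩ j j' (hli ▸ hjl) (hli ▸ hj'l) (hli' ▸ hjl') hi hj hi'j hij'
  · intro h i i' j j' hj _ _ hi hjj hi'j hij'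
    exact h hi hjj (by rwa [hl]) hi'j hij'

theorem leF_eq_card (hl : ∀ i : Fin k, l i = lam i) (r : ℕ) :
    leF lam r = (leFillings k l r).card := by
  classical
  rw [leF, Nat.card_eq_fintype_card, Fintype.card_subtype]
  refine (card_nbij' (ofCells lam) (ones lam) ?_ ?_ ?_ ?_).symm
  · intro S hS
    obtain ⟨hsub, hle, hcard⟩ := mem_leFillings.mp hS
    simp only [coe_filter, mem_univ, true_and, Set.mem_ofPred_eq]
    refine ⟨(isLeFilling_ofCells_iff hl hsub).mpr hle, ?_⟩
    rw [← card_ones, ones_ofCells hl hsub, hcard]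
  · intro D hD
    simp only [coe_filter, mem_univ, true_and, Set.mem_ofPred_eq] at hD
    obtain ⟨hle, hcard⟩ := hD
    rw [← ofCells_ones D] at hle
    exact mem_leFillings.mpr ⟨ones_subset_shape hl D,
      (isLeFilling_ofCells_iff hl (ones_subset_shape hl D)).mp hle, by rw [card_ones, hcard]⟩
  · intro S hS
    exact ones_ofCells hl (mem_leFillings.mp hS).1
  · intro D _
    exact ofCells_ones D

end FinEncoding

theorem shape_subset_shape {m n : ℕ} (h : m ≤ n) : shape m l ⊆ shape n l := by
  intro p hp
  rw [mem_shape] at hp ⊢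
  omega

theorem filter_subset_shape_leFillings {m n : ℕ} (h : m ≤ n) (r : ℕ) :
    (leFillings n l r).filter (· ⊆ shape m l) = leFillings m l r := by
  ext S
  simp only [mem_filter, mem_leFillings]
  constructor
  · rintro ⟨⟨-, hle, hcard⟩, hsub⟩
    exact ⟨hsub, hle, hcard⟩
  · rintro ⟨hsub, hle, hcard⟩
    exact ⟨⟨hsub.trans (shape_subset_shape h), hle, hcard⟩, hsub⟩

section Corner

variable {k c : ℕ}

theorem shape_update_last (hk : l k = c + 1) :
    shape (k + 1) (Function.update l k c) = (shape (k + 1) l).erase (k, c) := by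
  ext ⟨a, b⟩
  rcases eq_or_ne a k with rfl | ha
  · simp only [mem_shape, mem_erase, ne_eq, Prod.mk.injEq, true_and, Function.update_self, hk]
    omega
  · simp [ha]

theorem IsLeSet.erase_corner {S : Finset (ℕ × ℕ)} (hS : IsLeSet l S) (hk : l k = c + 1) :
    IsLeSet (Function.update l k c) (S.erase (k, c)) := by
  intro i' i j' j hi hj hjl hi'j hij'
  rw [mem_erase] at hi'j hij' ⊢
  rcases eq_or_ne i k with rfl | hik
  · rw [Function.update_self] at hjl
    exact ⟨by simp [hjl.ne], hS hi hj (by omega) hi'j.2 hij'.2⟩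
  · rw [Function.update_of_ne hik] at hjl
    exact ⟨by simp [hik], hS hi hj hjl hi'j.2 hij'.2⟩

theorem IsLeSet.insert_corner {T : Finset (ℕ × ℕ)}
    (hT : IsLeSet (Function.update l k c) T) (hsub : T ⊆ shape (k + 1) (Function.update l k c))
    (hk : l k = c + 1) : IsLeSet l (insert (k, c) T) := by
  intro i' i j' j hi hj hjl hi'j hij'
  rw [mem_insert] at hi'j hij' ⊢
  by_cases hcorner : (i, j) = (k, c)
  · exact .inl hcorner
  have hij'T : (i, j') ∈ T := by
    refine hij'.resolve_left ?_
    rintro ⟨rfl, rfl⟩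
    omega
  have hi_lt : i < k + 1 := (mem_shape.mp (hsub hij'T)).1
  have hi'jT : (i', j) ∈ T := by
    refine hi'j.resolve_left ?_
    simp only [Prod.mk.injEq]
    omega
  refine .inr (hT hi hj ?_ hi'jT hij'T)
  rcases eq_or_ne i k with rfl | hik
  · simp only [Prod.mk.injEq, true_and] at hcorner
    rw [Function.update_self]
    omega
  · rwa [Function.update_of_ne hik]

theorem card_filter_corner_mem (hk : l k = c + 1) (r : ℕ) :
    ((leFillings (k + 1) l r).filter ((k, c) ∈ ·)).card =
      if r = 0 then 0 else (leFillings (k + 1) (Function.update l k c) (r - 1)).card := by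
  rcases r with _ | r
  · rw [if_pos rfl, card_eq_zero, filter_eq_empty_iff]
    intro S hS
    rw [card_eq_zero.mp (mem_leFillings.mp hS).2.2]
    exact notMem_empty _
  rw [if_neg r.succ_ne_zero, Nat.add_sub_cancel]
  refine card_nbij' (·.erase (k, c)) (insert (k, c)) ?_ ?_ ?_ ?_
  · intro S hS
    obtain ⟨hS, hcorner⟩ := mem_filter.mp hS
    obtain ⟨hsub, hle, hcard⟩ := mem_leFillings.mp hS
    refine mem_leFillings.mpr ⟨?_, hle.erase_corner hk, by rw [card_erase_of_mem hcorner, hcard]; rfl⟩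
    rw [shape_update_last hk]
    exact erase_subset_erase _ hsub
  · intro T hT
    obtain ⟨hsub, hle, hcard⟩ := mem_leFillings.mp hT
    have hcorner : (k, c) ∉ T := fun h => by simpa [shape_update_last hk] using hsub h
    refine mem_filter.mpr ⟨mem_leFillings.mpr ⟨?_, hle.insert_corner hsub hk, ?_⟩, mem_insert_self _ _⟩
    · rw [shape_update_last hk] at hsub
      exact insert_subset (by simp [hk]) (hsub.trans (erase_subset _ _))
    · rw [card_insert_of_notMem hcorner, hcard]
  · intro S hS
    exact insert_erase (mem_filter.mp hS).2
  · intro T hT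
    have hsub := (mem_leFillings.mp hT).1
    exact erase_insert fun h => by simpa [shape_update_last hk] using hsub h

end Corner

section Column

def skip (c j : ℕ) : ℕ := if j < c then j else j + 1

variable {c : ℕ}

theorem strictMono_skip (c : ℕ) : StrictMono (skip c) := by
  intro a b hab
  unfold skip
  split_ifs <;> omega

theorem skip_ne (c j : ℕ) : skip c j ≠ c := by
  unfold skip
  split_ifs <;> omega

theorem exists_skip_eq {j : ℕ} (h : j ≠ c) : ∃ j', skip c j' = j := by
  rcases lt_or_gt_of_ne h with h | h
  · exact ⟨j, if_pos h⟩
  · exact ⟨j - 1, by unfold skip; split_ifs <;> omega⟩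

theorem skip_lt_iff {j m : ℕ} (h : c < m) : skip c j < m ↔ j < m - 1 := by
  unfold skip
  split_ifs <;> omega

def skipColumn (c : ℕ) : ℕ × ℕ ↪ ℕ × ℕ :=
  (Function.Embedding.refl ℕ).prodMap ⟨skip c, (strictMono_skip c).injective⟩

@[simp]
theorem skipColumn_apply (p : ℕ × ℕ) : skipColumn c p = (p.1, skip c p.2) := rfl

theorem map_skipColumn_preimage {S : Finset (ℕ × ℕ)} (hS : ∀ p ∈ S, p.2 ≠ c) :
    (S.preimage (skipColumn c) (skipColumn c).injective.injOn).map (skipColumn c) = S := by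
  ext ⟨a, b⟩
  simp only [mem_map, mem_preimage, skipColumn_apply, Prod.exists, Prod.mk.injEq]
  constructor
  · rintro ⟨a, j, hj, rfl, rfl⟩
    exact hj
  · intro hab
    obtain ⟨j, rfl⟩ := exists_skip_eq (hS _ hab)
    exact ⟨a, j, hab, rfl, rfl⟩

variable {n : ℕ}

theorem map_skipColumn_subset_shape_iff (hc : ∀ i < n, c < l i) {T : Finset (ℕ × ℕ)} :
    T.map (skipColumn c) ⊆ shape n l ↔ T ⊆ shape n (fun i => l i - 1) := by
  simp only [subset_iff, forall_mem_map, skipColumn_apply, mem_shape]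
  exact forall₂_congr fun p _ => and_congr_right fun hp => skip_lt_iff (hc _ hp)

theorem isLeSet_map_skipColumn_iff (hc : ∀ i < n, c < l i) {T : Finset (ℕ × ℕ)}
    (hT : T ⊆ shape n (fun i => l i - 1)) :
    IsLeSet l (T.map (skipColumn c)) ↔ IsLeSet (fun i => l i - 1) T := by
  have mem_map_skip {i j : ℕ} : (i, skip c j) ∈ T.map (skipColumn c) ↔ (i, j) ∈ T :=
    mem_map' (skipColumn c) (a := (i, j))
  constructor
  · intro h i' i j' j hi hj hjl hi'j hij'
    have hin : i < n := (mem_shape.mp (hT hij')).1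
    exact mem_map_skip.mp <| h hi (strictMono_skip c hj) ((skip_lt_iff (hc i hin)).mpr hjl)
      (mem_map_skip.mpr hi'j) (mem_map_skip.mpr hij')
  · intro h i' i J' J hi hlt hJl hi'J hiJ'
    obtain ⟨⟨a, j⟩, hi'j, hJ⟩ := mem_map.mp hi'J
    obtain ⟨⟨b, j'⟩, hij', hJ'⟩ := mem_map.mp hiJ'
    simp only [skipColumn_apply, Prod.mk.injEq] at hJ hJ'
    obtain ⟨rfl, rfl⟩ := hJ
    obtain ⟨rfl, rfl⟩ := hJ'
    have hin := (mem_shape.mp (hT hij')).1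
    exact mem_map_skip.mpr <| h hi ((strictMono_skip c).lt_iff_lt.mp hlt)
      ((skip_lt_iff (hc _ hin)).mp hJl) hi'j hij'

theorem card_filter_column_empty (hc : ∀ i < n, c < l i) (r : ℕ) :
    ((leFillings n l r).filter fun S => ∀ p ∈ S, p.2 ≠ c).card =
      (leFillings n (fun i => l i - 1) r).card := by
  refine card_nbij' (fun S => S.preimage (skipColumn c) (skipColumn c).injective.injOn)
    (·.map (skipColumn c)) ?_ ?_ ?_ ?_
  · intro S hS
    obtain ⟨hS, hcol⟩ := mem_filter.mp hS
    obtain ⟨hsub, hle, hcard⟩ := mem_leFillings.mp hS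
    rw [← map_skipColumn_preimage hcol] at hsub hle hcard
    have hsub' := (map_skipColumn_subset_shape_iff hc).mp hsub
    exact mem_leFillings.mpr
      ⟨hsub', (isLeSet_map_skipColumn_iff hc hsub').mp hle, by rwa [card_map] at hcard⟩
  · intro T hT
    obtain ⟨hsub, hle, hcard⟩ := mem_leFillings.mp hT
    refine mem_filter.mpr ⟨mem_leFillings.mpr ⟨(map_skipColumn_subset_shape_iff hc).mpr hsub,
      (isLeSet_map_skipColumn_iff hc hsub).mpr hle, by rw [card_map, hcard]⟩, ?_⟩
    simpa only [forall_mem_map, skipColumn_apply] using fun (p : ℕ × ℕ) _ => skip_ne c p.2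
  · intro S hS
    exact map_skipColumn_preimage (mem_filter.mp hS).2
  · intro T _
    exact preimage_map _ _

end Column

section Recurrence

variable {k c r : ℕ}

theorem column_empty_or_subset_shape (hk : l k = c + 1) {S : Finset (ℕ × ℕ)}
    (hS : S ∈ leFillings (k + 1) l r) (hcorner : (k, c) ∉ S) :
    (∀ p ∈ S, p.2 ≠ c) ∨ S ⊆ shape k l := by
  obtain ⟨hsub, hle, -⟩ := mem_leFillings.mp hS
  refine or_iff_not_imp_right.mpr fun hrow => ?_
  rintro ⟨i, j⟩ hij (hjc : j = c)
  rw [hjc] at hij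
  obtain ⟨⟨a, b⟩, hab, hab'⟩ := not_subset.mp hrow
  have hsab := hsub hab
  have hsij := hsub hij
  simp only [mem_shape] at hab' hsab hsij
  obtain rfl : a = k := by omega
  have hb : b ≠ c := by rintro rfl; exact hcorner hab
  have hi : i ≠ a := by rintro rfl; exact hcorner hij
  exact hcorner (hle (by omega) (by omega) (by omega) hij hab)

theorem filter_corner_notMem_eq (hk : l k = c + 1) :
    (leFillings (k + 1) l r).filter ((k, c) ∉ ·) =
      (leFillings (k + 1) l r).filter (fun S => ∀ p ∈ S, p.2 ≠ c) ∪
        (leFillings (k + 1) l r).filter (· ⊆ shape k l) := by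
  ext S
  simp only [mem_union, mem_filter]
  constructor
  · rintro ⟨hS, hcorner⟩
    exact (column_empty_or_subset_shape hk hS hcorner).imp (⟨hS, ·⟩) (⟨hS, ·⟩)
  · rintro (⟨hS, hcol⟩ | ⟨hS, hrow⟩)
    · exact ⟨hS, fun h => hcol _ h rfl⟩
    · exact ⟨hS, fun h => by simpa using hrow h⟩

theorem card_leFillings_add_card (hk : l k = c + 1) (hc : ∀ i < k + 1, c < l i) (r : ℕ) :
    (leFillings (k + 1) l r).card + (leFillings k (fun i => l i - 1) r).card =
      (if r = 0 then 0 else (leFillings (k + 1) (Function.update l k c) (r - 1)).card) +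
        (leFillings k l r).card + (leFillings (k + 1) (fun i => l i - 1) r).card := by
  have hsplit := card_filter_add_card_filter_not (s := leFillings (k + 1) l r) ((k, c) ∈ ·)
  have hinter : ((leFillings (k + 1) l r).filter fun S => ∀ p ∈ S, p.2 ≠ c) ∩
      (leFillings (k + 1) l r).filter (· ⊆ shape k l) =
        (leFillings k l r).filter fun S => ∀ p ∈ S, p.2 ≠ c := by
    rw [← filter_and, ← filter_subset_shape_leFillings k.le_succ, filter_filter]
    exact filter_congr fun _ _ => and_comm
  have hunion := card_union_add_card_inter
    ((leFillings (k + 1) l r).filter fun S => ∀ p ∈ S, p.2 ≠ c)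
    ((leFillings (k + 1) l r).filter (· ⊆ shape k l))
  rw [← filter_corner_notMem_eq hk, hinter, card_filter_column_empty hc,
    card_filter_column_empty fun i hi => hc i (hi.trans k.lt_succ_self),
    filter_subset_shape_leFillings k.le_succ] at hunion
  rw [card_filter_corner_mem hk] at hsplit
  split_ifs at hsplit ⊢ <;> omega

end Recurrence

end LeFilling

open LeFilling

/-- The recurrence
`F_λ(q) = q·F_{(λ₁,…,λ_{k-1},λ_k−1)}(q) + F_{(λ₁,…,λ_{k-1})}(q) + F_{(λ₁−1,…,λ_k−1)}(q) − F_{(λ₁−1,…,λ_{k-1}−1)}(q)`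
for a partition `λ = (λ₁,…,λ_k)` with all parts `≥ 1`, stated coefficientwise. -/
theorem leF_recurrence (k : ℕ) (lam : Fin (k + 1) → ℕ) (hanti : Antitone lam)
    (hpos : ∀ i, 1 ≤ lam i) (r : ℕ) :
    (leF lam r : ℤ) =
      (if r = 0 then 0 else
        (leF (Function.update lam (Fin.last k) (lam (Fin.last k) - 1)) (r - 1) : ℤ))
      + (leF (fun i : Fin k => lam i.castSucc) r : ℤ)
      + (leF (fun i : Fin (k + 1) => lam i - 1) r : ℤ)
      - (leF (fun i : Fin k => lam i.castSucc - 1) r : ℤ) := by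
  set l : ℕ → ℕ := fun i => if h : i < k + 1 then lam ⟨i, h⟩ else 0
  have hl (i : Fin (k + 1)) : l i = lam i := dif_pos i.isLt
  have hlast := hl (Fin.last k)
  have hk : l k = (lam (Fin.last k) - 1) + 1 := by
    have := hpos (Fin.last k)
    simp only [Fin.val_last] at hlast
    omega
  have hc (i : ℕ) (hi : i < k + 1) : lam (Fin.last k) - 1 < l i := by
    have := hanti (Fin.le_last ⟨i, hi⟩)
    have : l i = lam ⟨i, hi⟩ := hl ⟨i, hi⟩
    have := hpos (Fin.last k)
    omega
  have key := card_leFillings_add_card hk hc r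
  rw [leF_eq_card hl, leF_eq_card (l := l) fun i => hl i.castSucc,
    leF_eq_card (lam := fun i => lam i - 1) (l := fun i => l i - 1)
      fun i => congrArg (· - 1) (hl i),
    leF_eq_card (lam := fun i => lam i.castSucc - 1) (l := fun i => l i - 1)
      fun i => congrArg (· - 1) (hl i.castSucc),
    leF_eq_card (l := Function.update l k (lam (Fin.last k) - 1))
      fun i => by simp [Function.update_apply, Fin.ext_iff, hl]]
  split_ifs at key ⊢ <;> omega
end

section
/- For a partition (λ_1, λ_2) with λ_1 ≥ λ_2 ≥ 0, the Le-filling generating polynomial satisfies q·F_{(λ_1,λ_2)}(q) = −(1+q)^{λ_1} + (1+q)^{λ_1−λ_2+1}·(1+q+q^2)^{λ_2}. -/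
/-!
Since `λ₂ ≤ λ₁`, a two-row filling is a word of `λ₂` columns (top cell, bottom cell) followed
by `λ₁ - λ₂` unconstrained cells of the top row, so `F_{(λ₁,λ₂)} = G_{λ₂} · (1+q)^{λ₁-λ₂}`,
where `G_n` counts the column words of length `n` satisfying the Le condition. Peel off the
first column of such a word: if its bottom cell is `0`, the rest is again an arbitrary Le word;
if it is `1`, the rest may not contain the column `(1, 0)` anywhere, which leaves `(1+q+q²)^n`
words. Hence `G_{n+1} = (1+q) G_n + (q+q²)(1+q+q²)^n`, which solves to
`q G_n = (1+q)(1+q+q²)^n - (1+q)^n`.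
-/

open Polynomial Finset

lemma sum_range_natCard_mul_X_pow {R α : Type*} [CommSemiring R] [Fintype α] (p : α → Prop)
    [DecidablePred p] (w : α → ℕ) {N : ℕ} (hw : ∀ x, w x ≤ N) :
    ∑ r ∈ range (N + 1), (Nat.card {x // p x ∧ w x = r} : R[X]) * X ^ r =
      ∑ x with p x, (X : R[X]) ^ w x := by
  rw [← sum_fiberwise_of_maps_to (g := w) fun x _ ↦ mem_range_succ_iff.mpr (hw x)]
  refine sum_congr rfl fun r _ ↦ ?_
  rw [Nat.card_eq_fintype_card, Fintype.card_subtype, ← filter_filter,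
    sum_congr rfl fun x hx ↦ by rw [(mem_filter.mp hx).2], sum_const, nsmul_eq_mul]

lemma onesCount_le {k : ℕ} (lam : Fin k → ℕ) (D : ∀ i : Fin k, Fin (lam i) → Bool) :
    onesCount lam D ≤ ∑ i, lam i :=
  sum_le_sum fun i _ ↦ (card_filter_le _ _).trans (card_fin (lam i)).le

lemma Fintype.sum_pi_fin_succ {β M : Type*} [Fintype β] [AddCommMonoid M] {n : ℕ}
    (f : (Fin (n + 1) → β) → M) : ∑ w, f w = ∑ c, ∑ w, f (Fin.cons c w) := by
  rw [← (Fin.consEquiv fun _ ↦ β).sum_comp, Fintype.sum_prod_type]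
  rfl

lemma card_filter_eq_true {α : Type*} [Fintype α] (a : α → Bool) :
    #{x | a x = true} = ∑ x, (a x).toNat := by
  rw [card_filter]
  exact sum_congr rfl fun x _ ↦ by cases a x <;> rfl

-- A column is the pair `(top cell, bottom cell)`.
def IsLeWord {n : ℕ} (w : Fin n → Bool × Bool) : Prop :=
  ∀ ⦃j' j : Fin n⦄, j' < j → (w j).1 = true → (w j').2 = true → (w j).2 = true

instance {n : ℕ} : DecidablePred (@IsLeWord n) := fun w ↦ by unfold IsLeWord; infer_instance

def colWeight (c : Bool × Bool) : ℕ := c.1.toNat + c.2.toNat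

noncomputable def leWordPoly (n : ℕ) : ℤ[X] :=
  ∑ w : Fin n → Bool × Bool with IsLeWord w, ∏ j, X ^ colWeight (w j)

lemma isLeWord_cons_false {n : ℕ} (a : Bool) (w : Fin n → Bool × Bool) :
    IsLeWord (Fin.cons (a, false) w : Fin (n + 1) → Bool × Bool) ↔ IsLeWord w := by
  refine ⟨fun H j' j hlt ↦ ?_, fun H j' j hlt ↦ ?_⟩
  · simpa using @H j'.succ j.succ (Fin.succ_lt_succ_iff.mpr hlt)
  · induction j' using Fin.cases with
    | zero => simp
    | succ j' =>
      induction j using Fin.cases with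
      | zero => exact absurd hlt (Fin.not_lt_zero _)
      | succ j => simpa using @H j' j (Fin.succ_lt_succ_iff.mp hlt)

lemma isLeWord_cons_true {n : ℕ} (a : Bool) (w : Fin n → Bool × Bool) :
    IsLeWord (Fin.cons (a, true) w : Fin (n + 1) → Bool × Bool) ↔
      ∀ j, (w j).1 = true → (w j).2 = true := by
  refine ⟨fun H j ↦ by simpa using @H 0 j.succ (Fin.succ_pos j), fun H j' j hlt ↦ ?_⟩
  induction j using Fin.cases with
  | zero => exact absurd hlt (Fin.not_lt_zero _)
  | succ j => simpa using fun h _ ↦ H j h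

lemma sum_dominated_prod_X_pow_colWeight (n : ℕ) :
    ∑ w : Fin n → Bool × Bool with ∀ j, (w j).1 = true → (w j).2 = true,
      ∏ j, (X : ℤ[X]) ^ colWeight (w j) = (1 + X + X ^ 2) ^ n := by
  have : (univ.filter fun w : Fin n → Bool × Bool ↦ ∀ j, (w j).1 = true → (w j).2 = true) =
      Fintype.piFinset fun _ ↦ {c : Bool × Bool | c.1 = true → c.2 = true} := by
    ext w; simp
  rw [this, ← sum_pow' _ fun c ↦ (X : ℤ[X]) ^ colWeight c, sum_filter, Fintype.sum_prod_type]
  simp [colWeight, add_comm]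

lemma leWordPoly_succ (n : ℕ) :
    leWordPoly (n + 1) = (1 + X) * leWordPoly n + (X + X ^ 2) * (1 + X + X ^ 2) ^ n := by
  rw [← sum_dominated_prod_X_pow_colWeight, leWordPoly, leWordPoly, sum_filter, sum_filter,
    sum_filter, Fintype.sum_pi_fin_succ]
  simp only [Fin.prod_univ_succ, Fin.cons_zero, Fin.cons_succ, Fintype.sum_prod_type,
    Fintype.sum_bool, isLeWord_cons_false, isLeWord_cons_true, ← mul_ite_zero, ← mul_sum]
  simp only [colWeight, Bool.toNat_true, Bool.toNat_false]
  ring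

lemma X_mul_leWordPoly (n : ℕ) :
    X * leWordPoly n = (1 + X) * (1 + X + X ^ 2) ^ n - (1 + X) ^ n := by
  induction n with
  | zero => simp [leWordPoly, IsLeWord]
  | succ n ih =>
    rw [leWordPoly_succ, pow_succ, pow_succ]
    linear_combination (1 + X) * ih

def twoRowEquiv (m d : ℕ) :
    (∀ i : Fin 2, Fin (![m + d, m] i) → Bool) ≃ (Fin m → Bool × Bool) × (Fin d → Bool) where
  toFun D := (fun j ↦ (D 0 (Fin.castAdd d j), D 1 j), fun k ↦ D 0 (Fin.natAdd m k))
  invFun p := Fin.cons (α := fun i ↦ Fin (![m + d, m] i) → Bool)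
    (Fin.append (fun j ↦ (p.1 j).1) p.2) (Fin.cons (fun j ↦ (p.1 j).2) finZeroElim)
  left_inv D := by
    funext i
    fin_cases i
    · exact Fin.append_castAdd_natAdd
    · rfl
  right_inv p := by
    ext j
    · exact Fin.append_left (fun j ↦ (p.1 j).1) p.2 j
    · rfl
    · exact Fin.append_right (fun j ↦ (p.1 j).1) p.2 j

lemma isLeFilling_iff_isLeWord {m d : ℕ} (D : ∀ i : Fin 2, Fin (![m + d, m] i) → Bool) :
    IsLeFilling ![m + d, m] D ↔ IsLeWord (twoRowEquiv m d D).1 := by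
  refine ⟨fun H j' j hlt ↦ H 1 0 j j' j.2 j'.2 (Fin.castAdd d j).2 Fin.zero_lt_one hlt, ?_⟩
  intro H i i' j j' hj hj' _ hii' hjj'
  obtain ⟨rfl, rfl⟩ : i = 1 ∧ i' = 0 :=
    (by decide : ∀ a b : Fin 2, b < a → a = 1 ∧ b = 0) i i' hii'
  exact @H ⟨j', hj'⟩ ⟨j, hj⟩ hjj'

lemma onesCount_eq_sum_colWeight_add {m d : ℕ} (D : ∀ i : Fin 2, Fin (![m + d, m] i) → Bool) :
    onesCount ![m + d, m] D = ∑ j, colWeight ((twoRowEquiv m d D).1 j) +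
      ∑ k, ((twoRowEquiv m d D).2 k).toNat := by
  rw [onesCount, Fin.sum_univ_two, card_filter_eq_true, card_filter_eq_true]
  -- `erw`: the top row is indexed by `Fin (![m + d, m] 0)`, which is `Fin (m + d)` only up to defeq
  erw [Fin.sum_univ_add]
  simp only [colWeight, sum_add_distrib, twoRowEquiv]
  rw [add_right_comm]
  rfl

open scoped Classical in
lemma sum_isLeFilling_X_pow_onesCount (m d : ℕ) :
    ∑ D with IsLeFilling ![m + d, m] D, (X : ℤ[X]) ^ onesCount ![m + d, m] D =
      leWordPoly m * (1 + X) ^ d := by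
  rw [sum_filter, ← (twoRowEquiv m d).symm.sum_comp]
  simp only [isLeFilling_iff_isLeWord, onesCount_eq_sum_colWeight_add, Equiv.apply_symm_apply,
    pow_add, ← prod_pow_eq_pow_sum]
  rw [Fintype.sum_prod_type]
  simp only [← ite_zero_mul, ← mul_sum, ← sum_mul]
  rw [leWordPoly, sum_filter, ← Fintype.sum_pow fun b : Bool ↦ (X : ℤ[X]) ^ b.toNat]
  simp only [Fintype.sum_bool, Bool.toNat_true, Bool.toNat_false, pow_one, pow_zero]
  ring

open Polynomial in
/-- For a partition `(λ₁, λ₂)` with `λ₁ ≥ λ₂ ≥ 0`: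
`q·F_{(λ₁,λ₂)}(q) = −(1+q)^{λ₁} + (1+q)^{λ₁−λ₂+1}·(1+q+q²)^{λ₂}`. -/
theorem two_row_leF (l1 l2 : ℕ) (h : l2 ≤ l1) :
    (X : Polynomial ℤ) *
        (∑ r ∈ Finset.range (l1 + l2 + 1), Polynomial.C (leF ![l1, l2] r : ℤ) * X ^ r) =
      -(1 + X) ^ l1 + (1 + X) ^ (l1 - l2 + 1) * (1 + X + X ^ 2) ^ l2 := by
  classical
  obtain ⟨d, rfl⟩ := Nat.exists_eq_add_of_le h
  have hle : ∀ D, onesCount ![l2 + d, l2] D ≤ l2 + d + l2 := fun D ↦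
    (onesCount_le _ D).trans (by simp)
  simp only [map_natCast, leF]
  rw [sum_range_natCard_mul_X_pow _ _ hle, sum_isLeFilling_X_pow_onesCount, ← mul_assoc,
    X_mul_leWordPoly, Nat.add_sub_cancel_left]
  ring
end

section
/- The q-series identity ∑_{i≥0} (-1)^i y^i q^{C(i+1,2)} ∏_{r=1}^{i+1} 1/(1−q^r y) = 1 holds as an identity of formal power series in y with coefficients in formal power series in q (equivalently, for |q| < 1 and |y| < 1 as analytic functions). -/
/-!
With `T n = (-1)^n y^n q^C(n+1,2) / ∏_{r=1}^n (1 - q^r y)`, the `i`-th summand is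
`T i - T (i+1)`, because `(1 - q^(i+1) y) + q^(i+1) y = 1`. Each factor has norm at least
`1 - |y|`, so `|T n| ≤ (|y| / (1 - |y|))^n |q|^C(n+1,2)`, which is summable by the ratio test.
Hence the series telescopes to `T 0 = 1`.
-/

open Filter Finset

theorem Summable.tsum_sub_succ {G : Type*} [AddCommGroup G] [TopologicalSpace G]
    [IsTopologicalAddGroup G] [T2Space G] {f : ℕ → G} (hf : Summable f) :
    ∑' n, (f n - f (n + 1)) = f 0 := by
  rw [hf.tsum_sub ((summable_nat_add_iff 1).2 hf), hf.tsum_eq_zero_add, add_sub_cancel_right]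

theorem Nat.choose_succ_succ_two (n : ℕ) : (n + 2).choose 2 = (n + 1).choose 2 + (n + 1) := by
  rw [Nat.choose_succ_succ, Nat.choose_one_right, add_comm]

section Field

variable {K : Type*} [Field K]

noncomputable def qTelescopeTerm (q y : K) (n : ℕ) : K :=
  (-1) ^ n * y ^ n * q ^ ((n + 1).choose 2) / ∏ r ∈ Icc 1 n, (1 - q ^ r * y)

theorem qTelescopeTerm_zero (q y : K) : qTelescopeTerm q y 0 = 1 := by
  simp [qTelescopeTerm]

theorem qTelescopeTerm_sub_succ {q y : K} {n : ℕ}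
    (h : ∏ r ∈ Icc 1 (n + 1), (1 - q ^ r * y) ≠ 0) :
    qTelescopeTerm q y n - qTelescopeTerm q y (n + 1) =
      (-1) ^ n * y ^ n * q ^ ((n + 1).choose 2) * ∏ r ∈ Icc 1 (n + 1), (1 - q ^ r * y)⁻¹ := by
  rw [prod_Icc_succ_top (Nat.le_add_left 1 n)] at h
  obtain ⟨hprod, hlast⟩ := mul_ne_zero_iff.1 h
  simp only [qTelescopeTerm, prod_inv_distrib, prod_Icc_succ_top (Nat.le_add_left 1 n),
    Nat.choose_succ_succ_two]
  generalize ∏ r ∈ Icc 1 n, (1 - q ^ r * y) = P at hprod ⊢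
  field_simp
  ring

end Field

section NormedField

variable {K : Type*} [NormedField K]

theorem summable_pow_mul_pow_choose_two [CompleteSpace K] (x : K) {r : K} (hr : ‖r‖ < 1) :
    Summable fun n ↦ x ^ n * r ^ ((n + 1).choose 2) := by
  have hratio : Tendsto (fun n : ℕ ↦ ‖x‖ * ‖r‖ ^ (n + 1)) atTop (nhds 0) := by
    simpa using ((tendsto_pow_atTop_nhds_zero_of_lt_one (norm_nonneg r) hr).comp
      (tendsto_add_atTop_nat 1)).const_mul ‖x‖
  refine summable_of_ratio_norm_eventually_le one_half_lt_one ?_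
  filter_upwards [hratio.eventually (gt_mem_nhds one_half_pos)] with n hn
  calc ‖x ^ (n + 1) * r ^ ((n + 2).choose 2)‖
      = ‖x‖ * ‖r‖ ^ (n + 1) * ‖x ^ n * r ^ ((n + 1).choose 2)‖ := by
        rw [Nat.choose_succ_succ_two]; simp only [norm_mul, norm_pow]; ring
    _ ≤ 1 / 2 * ‖x ^ n * r ^ ((n + 1).choose 2)‖ := by gcongr

theorem one_sub_norm_le_norm_one_sub_pow_mul {q : K} (hq : ‖q‖ ≤ 1) (y : K) (r : ℕ) :
    1 - ‖y‖ ≤ ‖1 - q ^ r * y‖ :=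
  calc 1 - ‖y‖ ≤ 1 - ‖q ^ r * y‖ := by
        rw [norm_mul, norm_pow]
        gcongr
        exact mul_le_of_le_one_left (norm_nonneg y) (pow_le_one₀ (norm_nonneg q) hq)
    _ = ‖(1 : K)‖ - ‖q ^ r * y‖ := by rw [norm_one]
    _ ≤ ‖1 - q ^ r * y‖ := norm_sub_norm_le _ _

theorem one_sub_norm_pow_le_norm_prod {q y : K} (hq : ‖q‖ ≤ 1) (hy : ‖y‖ ≤ 1) (n : ℕ) :
    (1 - ‖y‖) ^ n ≤ ‖∏ r ∈ Icc 1 n, (1 - q ^ r * y)‖ := by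
  rw [norm_prod]
  calc (1 - ‖y‖) ^ n = ∏ _r ∈ Icc 1 n, (1 - ‖y‖) := by simp
    _ ≤ ∏ r ∈ Icc 1 n, ‖1 - q ^ r * y‖ :=
      prod_le_prod (fun _ _ ↦ sub_nonneg.2 hy) fun r _ ↦
        one_sub_norm_le_norm_one_sub_pow_mul hq y r

theorem prod_one_sub_pow_mul_ne_zero {q y : K} (hq : ‖q‖ ≤ 1) (hy : ‖y‖ < 1) (n : ℕ) :
    ∏ r ∈ Icc 1 n, (1 - q ^ r * y) ≠ 0 :=
  norm_pos_iff.1 <| (pow_pos (sub_pos.2 hy) n).trans_le (one_sub_norm_pow_le_norm_prod hq hy.le n)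

theorem norm_qTelescopeTerm_le {q y : K} (hq : ‖q‖ ≤ 1) (hy : ‖y‖ < 1) (n : ℕ) :
    ‖qTelescopeTerm q y n‖ ≤ (‖y‖ / (1 - ‖y‖)) ^ n * ‖q‖ ^ ((n + 1).choose 2) := by
  rw [qTelescopeTerm, norm_div, norm_mul, norm_mul, norm_pow, norm_pow, norm_pow, norm_neg,
    norm_one, one_pow, one_mul, div_pow, ← mul_div_right_comm]
  exact div_le_div_of_nonneg_left (by positivity) (pow_pos (sub_pos.2 hy) n)
    (one_sub_norm_pow_le_norm_prod hq hy.le n)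

theorem summable_qTelescopeTerm [CompleteSpace K] {q y : K} (hq : ‖q‖ < 1) (hy : ‖y‖ < 1) :
    Summable (qTelescopeTerm q y) :=
  .of_norm_bounded (summable_pow_mul_pow_choose_two (K := ℝ) _ (by rwa [norm_norm]))
    (norm_qTelescopeTerm_le hq.le hy)

end NormedField

/-- The `q`-series identity
`∑_{i≥0} (-1)^i y^i q^{C(i+1,2)} ∏_{r=1}^{i+1} 1/(1−q^r y) = 1`,
stated analytically for `|q| < 1` and `|y| < 1`. -/
theorem q_series_identity (q y : ℝ) (hq : |q| < 1) (hy : |y| < 1) :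
    ∑' i : ℕ, (-1 : ℝ) ^ i * y ^ i * q ^ ((i + 1).choose 2) *
        ∏ r ∈ Finset.Icc 1 (i + 1), (1 - q ^ r * y)⁻¹ = 1 := by
  rw [← Real.norm_eq_abs] at hq hy
  calc _ = ∑' i, (qTelescopeTerm q y i - qTelescopeTerm q y (i + 1)) :=
        tsum_congr fun i ↦
          (qTelescopeTerm_sub_succ (prod_one_sub_pow_mul_ne_zero hq.le hy _)).symm
    _ = qTelescopeTerm q y 0 := (summable_qTelescopeTerm hq hy).tsum_sub_succ
    _ = 1 := qTelescopeTerm_zero q y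
end

section
/- For every integer j ≥ 0, the identity (−1)^j q^{−C(j+1,2)} y^{−j} ∑_{i≥j} (−1)^i q^{C(i+1,2)} qbinom(i,j) y^i ∏_{r=1}^{i+1} 1/(1 − q^{r+j} y) = 1 holds as an identity of formal power series. -/
/-- The `q`-factorial `[m]! = ∏_{r=1}^m (1 + q + ⋯ + q^{r-1})`, evaluated at a real `q`. -/
noncomputable def qFactorial (q : ℝ) (m : ℕ) : ℝ :=
  ∏ r ∈ Finset.Icc 1 m, ∑ t ∈ Finset.range r, q ^ t

/-- The Gaussian binomial coefficient `qbinom(i,j) = [i]!/([j]![i−j]!)`, evaluated at a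
real `q`. -/
noncomputable def qBinom (q : ℝ) (i j : ℕ) : ℝ :=
  qFactorial q i / (qFactorial q j * qFactorial q (i - j))

/-!
Put `x = q^j y`. Since
`(-1)^{k+j} q^{C(k+j+1,2)} y^{k+j} = (-1)^j q^{C(j+1,2)} y^j ⋅ (-1)^k q^{C(k+1,2)} x^k`
and `1 - q^{r+j} y = 1 - q^r x`, the claim is that
`∑_k (-1)^k q^{C(k+1,2)} [k+j, j] x^k / (xq; q)_{k+j+1} = 1`.
This series telescopes: with
`P_N = ∑_{s ≤ j} (-1)^{N+s} q^{C(N+s+1,2)} [N+j, j-s] x^{N+s}`, the `q`-Pascal rule gives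
`P_k (1 - x q^{k+j+1}) - P_{k+1} = (-1)^k q^{C(k+1,2)} [k+j, j] x^k`, so the `k`-th term is
`P_k / (xq; q)_{k+j} - P_{k+1} / (xq; q)_{k+j+1}`. The first quotient is `1` by the finite
`q`-binomial theorem `P_0 = (xq; q)_j`, and the quotients tend to `0` because `P_N = O(|x|^N)`
while `1 / (xq; q)_n` stays bounded.
-/

open Finset Filter Topology

noncomputable def qInt (q : ℝ) (r : ℕ) : ℝ := ∑ t ∈ range r, q ^ t

lemma qFactorial_eq_prod_qInt (q : ℝ) (m : ℕ) :
    qFactorial q m = ∏ r ∈ Icc 1 m, qInt q r :=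
  rfl

lemma qInt_add (q : ℝ) (a b : ℕ) : qInt q (a + b) = qInt q a + q ^ a * qInt q b := by
  simp only [qInt, sum_range_add, mul_sum, pow_add]

lemma qInt_ne_zero {q : ℝ} (hq : q ≠ -1) {r : ℕ} (hr : r ≠ 0) : qInt q r ≠ 0 :=
  fun h => hq ((geom_sum_eq_zero_iff_neg_one hr).mp h).1

lemma qFactorial_succ (q : ℝ) (m : ℕ) :
    qFactorial q (m + 1) = qFactorial q m * qInt q (m + 1) :=
  prod_Icc_succ_top (by omega) _

@[simp] lemma qFactorial_zero (q : ℝ) : qFactorial q 0 = 1 := prod_empty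

lemma qFactorial_add (q : ℝ) (a b : ℕ) :
    qFactorial q (a + b) = qFactorial q a * ∏ r ∈ Ioc a (a + b), qInt q r := by
  induction b with
  | zero => simp
  | succ b ih => rw [← add_assoc, qFactorial_succ, ih, prod_Ioc_succ_top (by omega), mul_assoc]

lemma qFactorial_ne_zero {q : ℝ} (hq : q ≠ -1) (m : ℕ) : qFactorial q m ≠ 0 :=
  prod_ne_zero_iff.mpr fun _ hr => qInt_ne_zero hq (by grind)

section
variable {q : ℝ} (hq : q ≠ -1)
include hq

lemma qBinom_zero_right (n : ℕ) : qBinom q n 0 = 1 := by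
  simp [qBinom, qFactorial_ne_zero hq n]

lemma qBinom_self (n : ℕ) : qBinom q n n = 1 := by
  simp [qBinom, qFactorial_ne_zero hq n]

lemma qBinom_succ_succ {n k : ℕ} (hk : k < n) :
    qBinom q (n + 1) (k + 1) = qBinom q n k + q ^ (k + 1) * qBinom q n (k + 1) := by
  obtain ⟨b, rfl⟩ : ∃ b, n = k + 1 + b := ⟨n - (k + 1), by omega⟩
  have hsplit : qInt q (k + 1 + b + 1) = qInt q (k + 1) + q ^ (k + 1) * qInt q (b + 1) :=
    qInt_add q (k + 1) (b + 1)
  simp only [qBinom, show k + 1 + b + 1 - (k + 1) = b + 1 by omega,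
    show k + 1 + b - k = b + 1 by omega, show k + 1 + b - (k + 1) = b by omega]
  rw [qFactorial_succ q (k + 1 + b), qFactorial_succ q k, qFactorial_succ q b, hsplit]
  have hfact := qFactorial_ne_zero hq
  have hk1 := qInt_ne_zero hq (Nat.succ_ne_zero k)
  have hb1 := qInt_ne_zero hq (Nat.succ_ne_zero b)
  field_simp

lemma qBinom_eq_prod_div {n m : ℕ} (hmn : m ≤ n) :
    qBinom q n m = (∏ r ∈ Ioc (n - m) n, qInt q r) / qFactorial q m := by
  have hn : qFactorial q n = qFactorial q (n - m) * ∏ r ∈ Ioc (n - m) n, qInt q r := by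
    simpa [Nat.sub_add_cancel hmn] using qFactorial_add q (n - m) m
  rw [qBinom, hn, mul_comm (qFactorial q m), mul_div_mul_left _ _ (qFactorial_ne_zero hq _)]

end

noncomputable def signedWeight (q x : ℝ) (m : ℕ) : ℝ :=
  (-1) ^ m * q ^ ((m + 1).choose 2) * x ^ m

lemma choose_two_add (a b : ℕ) : (a + b).choose 2 = a.choose 2 + b.choose 2 + a * b := by
  induction b with
  | zero => simp
  | succ b ih =>
    rw [← add_assoc, Nat.choose_succ_succ', Nat.choose_succ_succ' b, ih, Nat.choose_one_right,
      Nat.choose_one_right]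
    ring

@[simp] lemma signedWeight_zero (q x : ℝ) : signedWeight q x 0 = 1 := by simp [signedWeight]

lemma signedWeight_succ (q x : ℝ) (m : ℕ) :
    signedWeight q x (m + 1) = -(q ^ (m + 1) * x) * signedWeight q x m := by
  rw [signedWeight, signedWeight, Nat.choose_succ_succ' (m + 1), Nat.choose_one_right]
  ring

lemma signedWeight_add (q x : ℝ) (a b : ℕ) :
    signedWeight q x (a + b) = signedWeight q x a * signedWeight q (q ^ a * x) b := by
  rw [signedWeight, signedWeight, signedWeight, add_right_comm, choose_two_add,
    Nat.choose_succ_succ' b, Nat.choose_one_right]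
  ring

/-- `qPoch q x n` is `(xq; q)_n = (1 - xq) ⋯ (1 - xq^n)`. -/
noncomputable def qPoch (q x : ℝ) (n : ℕ) : ℝ := ∏ r ∈ Icc 1 n, (1 - q ^ r * x)

lemma qPoch_succ (q x : ℝ) (n : ℕ) : qPoch q x (n + 1) = qPoch q x n * (1 - q ^ (n + 1) * x) :=
  prod_Icc_succ_top (by omega) _

noncomputable def seriesTailNumerator (q x : ℝ) (j N : ℕ) : ℝ :=
  ∑ s ∈ range (j + 1), signedWeight q x (N + s) * qBinom q (N + j) (j - s)

lemma seriesTailNumerator_succ_add {q : ℝ} (hq : q ≠ -1) (x : ℝ) (j k : ℕ) :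
    seriesTailNumerator q x j (k + 1) + q ^ (k + j + 1) * x * seriesTailNumerator q x j k
      = seriesTailNumerator q x j k - signedWeight q x k * qBinom q (k + j) j := by
  have hlast : signedWeight q x (k + 1 + j) * qBinom q (k + 1 + j) (j - j)
      + q ^ (k + j + 1) * x * (signedWeight q x (k + j) * qBinom q (k + j) (j - j)) = 0 := by
    rw [Nat.sub_self, qBinom_zero_right hq, qBinom_zero_right hq, add_right_comm,
      signedWeight_succ]
    ring
  have hpascal : ∀ s ∈ range j,
      signedWeight q x (k + 1 + s) * qBinom q (k + 1 + j) (j - s)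
        + q ^ (k + j + 1) * x * (signedWeight q x (k + s) * qBinom q (k + j) (j - s))
      = signedWeight q x (k + (s + 1)) * qBinom q (k + j) (j - (s + 1)) := by
    intro s hs
    have hsj : s < j := mem_range.mp hs
    have h := qBinom_succ_succ hq (show j - s - 1 < k + j by omega)
    rw [show j - s - 1 + 1 = j - s by omega] at h
    rw [show k + 1 + j = k + j + 1 by omega, h, show k + 1 + s = k + s + 1 by omega,
      ← add_assoc, signedWeight_succ, show j - (s + 1) = j - s - 1 by omega,
      show k + j + 1 = k + s + 1 + (j - s) by omega]
    ring
  rw [seriesTailNumerator, seriesTailNumerator, mul_sum, ← sum_add_distrib, sum_range_succ, hlast,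
    add_zero, sum_congr rfl hpascal, sum_range_succ' _ j]
  simp only [add_zero, Nat.sub_zero, add_sub_cancel_right]

lemma seriesTailNumerator_zero {q : ℝ} (hq : q ≠ -1) (x : ℝ) (j : ℕ) :
    seriesTailNumerator q x j 0 = qPoch q x j := by
  induction j with
  | zero => simp [seriesTailNumerator, qPoch, signedWeight, qBinom_self hq]
  | succ j ih =>
    have hshift : seriesTailNumerator q x (j + 1) 0 = seriesTailNumerator q x j 1 + 1 := by
      simp [seriesTailNumerator, sum_range_succ' _ (j + 1), qBinom_self hq, add_comm 1]
    have hstep := seriesTailNumerator_succ_add hq x j 0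
    simp only [signedWeight_zero, zero_add, qBinom_self hq] at hstep
    rw [hshift, qPoch_succ, ← ih]
    linear_combination hstep

lemma qPoch_ne_zero {q x : ℝ} (hq : |q| ≤ 1) (hx : |x| < 1) (n : ℕ) : qPoch q x n ≠ 0 := by
  refine prod_ne_zero_iff.mpr fun r _ => sub_ne_zero.mpr (ne_of_gt ?_)
  calc q ^ r * x ≤ |q ^ r * x| := le_abs_self _
    _ = |q| ^ r * |x| := by rw [abs_mul, abs_pow]
    _ ≤ 1 * |x| := by gcongr; exact pow_le_one₀ (abs_nonneg q) hq
    _ < 1 := by linarith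

noncomputable def seriesTail (q x : ℝ) (j N : ℕ) : ℝ :=
  seriesTailNumerator q x j N / qPoch q x (N + j)

noncomputable def seriesTerm (q x : ℝ) (j k : ℕ) : ℝ :=
  signedWeight q x k * qBinom q (k + j) j / qPoch q x (k + j + 1)

section
variable {q x : ℝ} (hq : |q| < 1) (hx : |x| < 1)
include hq hx

lemma seriesTail_zero (j : ℕ) : seriesTail q x j 0 = 1 := by
  rw [seriesTail, seriesTailNumerator_zero (abs_lt.mp hq).1.ne', zero_add,
    div_self (qPoch_ne_zero hq.le hx j)]

lemma seriesTerm_eq_seriesTail_sub (j k : ℕ) :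
    seriesTerm q x j k = seriesTail q x j k - seriesTail q x j (k + 1) := by
  have hstep := seriesTailNumerator_succ_add (abs_lt.mp hq).1.ne' x j k
  have hnext := qPoch_ne_zero hq.le hx (k + j + 1)
  rw [qPoch_succ] at hnext
  have hpoch := left_ne_zero_of_mul hnext
  have hfactor := right_ne_zero_of_mul hnext
  rw [seriesTerm, seriesTail, seriesTail, add_right_comm k 1, qPoch_succ]
  field_simp
  linear_combination hstep

lemma sum_range_seriesTerm (j N : ℕ) :
    ∑ k ∈ range N, seriesTerm q x j k = 1 - seriesTail q x j N := by
  simp only [seriesTerm_eq_seriesTail_sub hq hx, sum_range_sub', seriesTail_zero hq hx]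

end

section
variable {q : ℝ} (hq : |q| < 1)
include hq

lemma abs_qInt_le (r : ℕ) : |qInt q r| ≤ (1 - |q|)⁻¹ := by
  calc |qInt q r| ≤ ∑ t ∈ range r, |q| ^ t := by
        simpa only [qInt, abs_pow] using abs_sum_le_sum_abs (fun t => q ^ t) (range r)
    _ ≤ |q| ^ 0 / (1 - |q|) := by
        rw [range_eq_Ico]; exact geom_sum_Ico_le_of_lt_one (abs_nonneg q) hq
    _ = (1 - |q|)⁻¹ := by rw [pow_zero, one_div]

lemma le_abs_qInt {r : ℕ} (hr : r ≠ 0) : (1 - |q|) / 2 ≤ |qInt q r| := by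
  have hmul : |qInt q r| * |1 - q| = |1 - q ^ r| := by rw [← abs_mul, qInt, geom_sum_mul_neg]
  have hnum : 1 - |q| ≤ |1 - q ^ r| :=
    calc 1 - |q| ≤ 1 - |q| ^ r := by gcongr; exact pow_le_of_le_one (abs_nonneg q) hq.le hr
      _ = |1| - |q ^ r| := by rw [abs_one, abs_pow]
      _ ≤ |1 - q ^ r| := abs_sub_abs_le_abs_sub _ _
  have hden : |1 - q| ≤ 2 :=
    calc |1 - q| ≤ |1| + |q| := abs_sub _ _
      _ ≤ 2 := by rw [abs_one]; linarith
  nlinarith [abs_nonneg (qInt q r)]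

lemma le_abs_qFactorial (m : ℕ) : ((1 - |q|) / 2) ^ m ≤ |qFactorial q m| := by
  rw [qFactorial_eq_prod_qInt, abs_prod]
  calc ((1 - |q|) / 2) ^ m = ∏ _r ∈ Icc 1 m, (1 - |q|) / 2 := by
        rw [prod_const, Nat.card_Icc, Nat.add_sub_cancel]
    _ ≤ ∏ r ∈ Icc 1 m, |qInt q r| :=
        prod_le_prod (fun _ _ => by linarith [abs_nonneg q]) fun r hr =>
          le_abs_qInt hq (by grind)

lemma abs_qBinom_le {n m : ℕ} (hmn : m ≤ n) : |qBinom q n m| ≤ (2 / (1 - |q|) ^ 2) ^ m := by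
  have hpos : 0 < 1 - |q| := by linarith
  have hnum : ∏ r ∈ Ioc (n - m) n, |qInt q r| ≤ ((1 - |q|)⁻¹) ^ m :=
    calc ∏ r ∈ Ioc (n - m) n, |qInt q r| ≤ ∏ _r ∈ Ioc (n - m) n, (1 - |q|)⁻¹ :=
          prod_le_prod (fun _ _ => abs_nonneg _) fun r _ => abs_qInt_le hq r
      _ = ((1 - |q|)⁻¹) ^ m := by rw [prod_const, Nat.card_Ioc, Nat.sub_sub_self hmn]
  rw [qBinom_eq_prod_div (abs_lt.mp hq).1.ne' hmn, abs_div, abs_prod]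
  calc (∏ r ∈ Ioc (n - m) n, |qInt q r|) / |qFactorial q m|
      ≤ ((1 - |q|)⁻¹) ^ m / ((1 - |q|) / 2) ^ m :=
        div_le_div₀ (by positivity) hnum (by positivity) (le_abs_qFactorial hq m)
    _ = (2 / (1 - |q|) ^ 2) ^ m := by rw [← div_pow]; congr 1; field_simp

end

lemma abs_signedWeight_le {q : ℝ} (hq : |q| ≤ 1) (x : ℝ) (m : ℕ) :
    |signedWeight q x m| ≤ |x| ^ m := by
  rw [signedWeight, abs_mul, abs_mul, abs_pow, abs_pow, abs_pow, abs_neg, abs_one, one_pow,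
    one_mul]
  exact mul_le_of_le_one_left (by positivity) (pow_le_one₀ (abs_nonneg q) hq)

lemma abs_seriesTailNumerator_le {q x : ℝ} (hq : |q| < 1) (hx : |x| ≤ 1) (j N : ℕ) :
    |seriesTailNumerator q x j N| ≤ (j + 1) * (2 / (1 - |q|) ^ 2) ^ j * |x| ^ N := by
  have hC : 1 ≤ 2 / (1 - |q|) ^ 2 := by
    rw [le_div_iff₀ (by nlinarith)]; nlinarith [abs_nonneg q]
  calc |seriesTailNumerator q x j N|
      ≤ ∑ s ∈ range (j + 1), |signedWeight q x (N + s) * qBinom q (N + j) (j - s)| :=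
        abs_sum_le_sum_abs _ _
    _ ≤ ∑ _s ∈ range (j + 1), |x| ^ N * (2 / (1 - |q|) ^ 2) ^ j := by
        refine sum_le_sum fun s hs => ?_
        rw [abs_mul]
        gcongr
        · exact (abs_signedWeight_le hq.le x _).trans
            (pow_le_pow_of_le_one (abs_nonneg x) hx (Nat.le_add_right N s))
        · exact (abs_qBinom_le hq (by omega)).trans (pow_le_pow_right₀ hC (Nat.sub_le j s))
    _ = (j + 1) * (2 / (1 - |q|) ^ 2) ^ j * |x| ^ N := by
        rw [sum_const, card_range, nsmul_eq_mul]; push_cast; ring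

lemma inv_one_sub_le_exp {t b : ℝ} (ht : 0 ≤ t) (htb : t ≤ b) (hb : b < 1) :
    (1 - t)⁻¹ ≤ Real.exp (t / (1 - b)) := by
  have h1 : 0 < 1 - t := by linarith
  calc (1 - t)⁻¹ = t / (1 - t) + 1 := by field_simp; ring
    _ ≤ t / (1 - b) + 1 := by gcongr
    _ ≤ Real.exp (t / (1 - b)) := Real.add_one_le_exp _

lemma abs_inv_qPoch_le {q x : ℝ} (hq : |q| < 1) (hx : |x| < 1) (n : ℕ) :
    |(qPoch q x n)⁻¹| ≤ Real.exp (|x| / (1 - |x|) * (|q| / (1 - |q|))) := by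
  have hfactor :
      ∀ r ∈ Icc 1 n, |(1 - q ^ r * x)⁻¹| ≤ Real.exp (|x| / (1 - |x|) * |q| ^ r) := by
    intro r _
    have ht : |q| ^ r * |x| ≤ |x| :=
      mul_le_of_le_one_left (abs_nonneg x) (pow_le_one₀ (abs_nonneg q) hq.le)
    have hlow : 1 - |q| ^ r * |x| ≤ |1 - q ^ r * x| :=
      calc 1 - |q| ^ r * |x| = |1| - |q ^ r * x| := by rw [abs_one, abs_mul, abs_pow]
        _ ≤ |1 - q ^ r * x| := abs_sub_abs_le_abs_sub _ _
    calc |(1 - q ^ r * x)⁻¹| ≤ (1 - |q| ^ r * |x|)⁻¹ := by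
          rw [abs_inv]; exact inv_anti₀ (by linarith) hlow
      _ ≤ Real.exp (|q| ^ r * |x| / (1 - |x|)) := inv_one_sub_le_exp (by positivity) ht hx
      _ = Real.exp (|x| / (1 - |x|) * |q| ^ r) := by ring_nf
  have hgeom : ∑ r ∈ Icc 1 n, |q| ^ r ≤ |q| / (1 - |q|) := by
    simpa [← Ico_add_one_right_eq_Icc] using
      geom_sum_Ico_le_of_lt_one (m := 1) (n := n + 1) (abs_nonneg q) hq
  rw [qPoch, ← prod_inv_distrib, abs_prod]
  calc ∏ r ∈ Icc 1 n, |(1 - q ^ r * x)⁻¹|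
      ≤ ∏ r ∈ Icc 1 n, Real.exp (|x| / (1 - |x|) * |q| ^ r) :=
        prod_le_prod (fun _ _ => abs_nonneg _) hfactor
    _ = Real.exp (|x| / (1 - |x|) * ∑ r ∈ Icc 1 n, |q| ^ r) := by rw [mul_sum, Real.exp_sum]
    _ ≤ Real.exp (|x| / (1 - |x|) * (|q| / (1 - |q|))) := by gcongr

lemma hasSum_seriesTerm {q x : ℝ} (hq : |q| < 1) (hx : |x| < 1) (j : ℕ) :
    HasSum (seriesTerm q x j) 1 := by
  set C := (2 / (1 - |q|) ^ 2) ^ j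
  set K := Real.exp (|x| / (1 - |x|) * (|q| / (1 - |q|)))
  have hgeom := tendsto_pow_atTop_nhds_zero_of_lt_one (abs_nonneg x) hx
  have hsummable : Summable (seriesTerm q x j) := by
    refine .of_norm_bounded ((summable_geometric_of_lt_one (abs_nonneg x) hx).mul_left (C * K))
      fun k => ?_
    rw [Real.norm_eq_abs, seriesTerm, div_eq_mul_inv, abs_mul, abs_mul]
    calc |signedWeight q x k| * |qBinom q (k + j) j| * |(qPoch q x (k + j + 1))⁻¹|
        ≤ |x| ^ k * C * K := by
          gcongr
          · exact abs_signedWeight_le hq.le x k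
          · exact abs_qBinom_le hq (Nat.le_add_left j k)
          · exact abs_inv_qPoch_le hq hx _
      _ = C * K * |x| ^ k := by ring
  have htail : Tendsto (seriesTail q x j) atTop (𝓝 0) := by
    refine squeeze_zero_norm (fun N => ?_) (by simpa using hgeom.const_mul ((j + 1) * C * K))
    rw [Real.norm_eq_abs, seriesTail, div_eq_mul_inv, abs_mul]
    calc |seriesTailNumerator q x j N| * |(qPoch q x (N + j))⁻¹|
        ≤ (j + 1) * C * |x| ^ N * K :=
          mul_le_mul (abs_seriesTailNumerator_le hq hx.le j N) (abs_inv_qPoch_le hq hx _)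
            (abs_nonneg _) (by positivity)
      _ = (j + 1) * C * K * |x| ^ N := by ring
  rw [hsummable.hasSum_iff_tendsto_nat]
  simpa [sum_range_seriesTerm hq hx] using tendsto_const_nhds.sub htail

lemma signedWeight_mul_seriesTerm (q y : ℝ) (j k : ℕ) :
    signedWeight q y j * seriesTerm q (q ^ j * y) j k
      = (-1 : ℝ) ^ (k + j) * q ^ ((k + j + 1).choose 2) * qBinom q (k + j) j * y ^ (k + j) *
          ∏ r ∈ Icc 1 (k + j + 1), (1 - q ^ (r + j) * y)⁻¹ := by
  have hprod : ∏ r ∈ Icc 1 (k + j + 1), (1 - q ^ (r + j) * y)⁻¹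
      = (qPoch q (q ^ j * y) (k + j + 1))⁻¹ := by
    rw [qPoch, ← prod_inv_distrib]
    exact prod_congr rfl fun r _ => by rw [pow_add, mul_assoc]
  have hweight := signedWeight_add q y j k
  rw [add_comm j k, signedWeight] at hweight
  rw [hprod, seriesTerm, div_eq_mul_inv]
  linear_combination -(qBinom q (k + j) j * (qPoch q (q ^ j * y) (k + j + 1))⁻¹) * hweight

/-- For every `j ≥ 0`, the identity
`(−1)^j q^{−C(j+1,2)} y^{−j} ∑_{i≥j} (−1)^i q^{C(i+1,2)} qbinom(i,j) y^i ∏_{r=1}^{i+1} 1/(1 − q^{r+j} y) = 1`,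
stated analytically for `0 < |q| < 1` and `0 < |y| < 1`. -/
theorem q_series_identity_general (j : ℕ) (q y : ℝ) (hq0 : q ≠ 0) (hq : |q| < 1)
    (hy0 : y ≠ 0) (hy : |y| < 1) :
    (-1 : ℝ) ^ j * q ^ (-(((j + 1).choose 2 : ℕ) : ℤ)) * y ^ (-(j : ℤ)) *
        ∑' i : ℕ, (if j ≤ i then
          (-1 : ℝ) ^ i * q ^ ((i + 1).choose 2) * qBinom q i j * y ^ i *
            ∏ r ∈ Finset.Icc 1 (i + 1), (1 - q ^ (r + j) * y)⁻¹
          else 0) = 1 := by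
  have hx : |q ^ j * y| < 1 := by
    rw [abs_mul, abs_pow]
    exact (mul_le_of_le_one_left (abs_nonneg y) (pow_le_one₀ (abs_nonneg q) hq.le)).trans_lt hy
  have hsum : HasSum (fun i => if j ≤ i then
      (-1 : ℝ) ^ i * q ^ ((i + 1).choose 2) * qBinom q i j * y ^ i *
        ∏ r ∈ Finset.Icc 1 (i + 1), (1 - q ^ (r + j) * y)⁻¹ else 0)
      (signedWeight q y j) := by
    rw [← (add_left_injective j).hasSum_iff
      fun i hi => if_neg fun hji => hi ⟨i - j, Nat.sub_add_cancel hji⟩]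
    simpa only [Function.comp_def, le_add_iff_nonneg_left, zero_le, if_true,
      ← signedWeight_mul_seriesTerm, mul_one] using
      (hasSum_seriesTerm hq hx j).mul_left (signedWeight q y j)
  rw [hsum.tsum_eq, signedWeight, zpow_neg, zpow_neg, zpow_natCast, zpow_natCast]
  field_simp
  rw [← pow_mul, mul_comm, pow_mul, neg_one_sq, one_pow]
end

section
/- The number of permutations of {1,...,n} with exactly 2 weak excedences and exactly ℓ alignments equals C(n, n−ℓ), for 0 ≤ ℓ ≤ n−2; equivalently, the polynomial Ê_{2,n}(q), recording 2(n−2) − #alignments as exponent shifted by q^{n−2}, equals ∑_{i=0}^{n−2} C(n, i+2) q^i. -/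
/-- Clockwise distance from `a` to `b` on `n` points arranged clockwise on a circle. -/
def cwDist {n : ℕ} (a b : Fin n) : ℕ := ((b - a : Fin n) : ℕ)

/-- The chords `i → π i` (as chord `A → B`, where `A = B` is allowed as a
counterclockwise loop at a fixed point) and `j → π j` (as chord `C → D`, which must not
be a loop) form an alignment in Postnikov's sense: they share no endpoint and the four
points appear in the clockwise cyclic order `A, B, D, C`, i.e. the two chords are
non-crossing and parallel. -/
def AlignedOrd {n : ℕ} (π : Equiv.Perm (Fin n)) (i j : Fin n) : Prop :=
  π i ≠ j ∧ π j ≠ i ∧ π j ≠ j ∧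
    cwDist i (π i) ≤ cwDist i (π j) ∧ cwDist i (π j) ≤ cwDist i j


instance {n : ℕ} (π : Equiv.Perm (Fin n)) (i j : Fin n) : Decidable (AlignedOrd π i j) := by
  unfold AlignedOrd; infer_instance

/-- The number of alignments of the chord diagram of `π` (fixed points drawn as
counterclockwise loops): the number of unordered pairs of chords forming an alignment.
Each aligned pair `{i, j}` is counted exactly once by the ordered predicate. -/
def alignments {n : ℕ} (π : Equiv.Perm (Fin n)) : ℕ :=
  (Finset.univ.filter fun p : Fin n × Fin n => AlignedOrd π p.1 p.2).card


section TwoExcAux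

variable {n : ℕ}

private lemma cwDist_eq (a b : Fin n) :
    cwDist a b = if a.val ≤ b.val then b.val - a.val else b.val + n - a.val := by
  have ha := a.isLt; have hb := b.isLt
  show ((b - a : Fin n) : ℕ) = _
  rw [Fin.sub_def]
  simp only []
  split_ifs with h
  · have h2 : n - a.val + b.val = n + (b.val - a.val) := by omega
    rw [h2, Nat.add_mod_left, Nat.mod_eq_of_lt (by omega)]
  · rw [Nat.mod_eq_of_lt (by omega)]
    omega

private lemma cwDist_lt (a b : Fin n) : cwDist a b < n := by
  have ha := a.isLt; have hb := b.isLt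
  rw [cwDist_eq]; split_ifs <;> omega

private lemma cwDist_eq_zero_iff (a b : Fin n) : cwDist a b = 0 ↔ a = b := by
  have ha := a.isLt; have hb := b.isLt
  rw [cwDist_eq, Fin.ext_iff]; split_ifs <;> omega

private lemma cwDist_left_cancel (a b c : Fin n) (h : cwDist a b = cwDist a c) : b = c := by
  have ha := a.isLt; have hb := b.isLt; have hc := c.isLt
  rw [cwDist_eq, cwDist_eq] at h
  rw [Fin.ext_iff]
  split_ifs at h <;> omega

private lemma cwDist_triangle (a b c : Fin n) :
    cwDist a c = cwDist a b + cwDist b c ∨ cwDist a c + n = cwDist a b + cwDist b c := by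
  have ha := a.isLt; have hb := b.isLt; have hc := c.isLt
  rw [cwDist_eq, cwDist_eq, cwDist_eq]
  split_ifs <;> omega

private lemma cwDist_comm_add (a b : Fin n) (h : a ≠ b) : cwDist a b + cwDist b a = n := by
  have ha := a.isLt; have hb := b.isLt
  have h' : a.val ≠ b.val := fun hh => h (Fin.ext hh)
  rw [cwDist_eq, cwDist_eq]
  split_ifs <;> omega

section NZ

variable [NeZero n] (hn : 2 ≤ n)
include hn

private lemma val_one_of : ((1 : Fin n) : ℕ) = 1 := by
  rw [Fin.val_one']; exact Nat.mod_eq_of_lt (by omega)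

private lemma sub_one_val (a : Fin n) :
    ((a - 1 : Fin n) : ℕ) = if a.val = 0 then n - 1 else a.val - 1 := by
  have ha := a.isLt
  rw [Fin.sub_def]
  simp only [val_one_of hn]
  split_ifs with h
  · rw [Nat.mod_eq_of_lt (by omega)]; omega
  · have h2 : n - 1 + a.val = n + (a.val - 1) := by omega
    rw [h2, Nat.add_mod_left, Nat.mod_eq_of_lt (by omega)]

private lemma add_one_val (a : Fin n) :
    ((a + 1 : Fin n) : ℕ) = if a.val = n - 1 then 0 else a.val + 1 := by
  rw [Fin.val_add, val_one_of hn]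
  have := a.isLt
  split_ifs with h
  · rw [h, Nat.sub_add_cancel (by omega), Nat.mod_self]
  · exact Nat.mod_eq_of_lt (by omega)

private lemma cwDist_sub_one (a b : Fin n) :
    cwDist a (b - 1) = if a = b then n - 1 else cwDist a b - 1 := by
  have h1 : b - 1 - a = (b - a) - 1 := sub_right_comm b 1 a
  show ((b - 1 - a : Fin n) : ℕ) = _
  rw [h1, sub_one_val hn]
  have h2 : ((b - a : Fin n) : ℕ) = cwDist a b := rfl
  rw [h2]
  have h3 : cwDist a b = 0 ↔ a = b := cwDist_eq_zero_iff a b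
  split_ifs with h4 h5 h5
  · rfl
  · exact absurd (h3.mp h4) h5
  · exact absurd (h3.mpr h5) h4
  · rfl

private lemma cwDist_self_add_one (a : Fin n) : cwDist a (a + 1) = 1 := by
  show ((a + 1 - a : Fin n) : ℕ) = 1
  rw [add_sub_cancel_left, val_one_of hn]

private lemma sub_one_ne (a : Fin n) : a - 1 ≠ a := by
  intro h
  have h2 : a = a + 1 := by
    conv_lhs => rw [← sub_add_cancel a 1, h]
  have h3 : (1 : Fin n) = 0 := (left_eq_add.mp h2)
  have := congrArg Fin.val h3
  rw [val_one_of hn] at this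
  simp at this

end NZ

/-- The structural description of permutations with two weak excedences:
`π i + 1` is the identity off `S` and the cyclic predecessor (the point of `S`
clockwise-farthest from `i`) on `S`. -/
private def Good [NeZero n] (π : Equiv.Perm (Fin n)) (S : Finset (Fin n)) : Prop :=
  2 ≤ S.card ∧ (∀ i, i ∉ S → π i + 1 = i) ∧
    ∀ i ∈ S, (π i + 1) ∈ S ∧ π i + 1 ≠ i ∧
      ∀ t ∈ S, t ≠ i → cwDist i t ≤ cwDist i (π i + 1)

private lemma pi_eq [NeZero n] {π : Equiv.Perm (Fin n)} {i P : Fin n} (h : π i + 1 = P) :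
    π i = P - 1 := by
  rw [← h, add_sub_cancel_right]

variable [NeZero n]

private lemma good_P_lt {π : Equiv.Perm (Fin n)} {S : Finset (Fin n)} (hG : Good π S)
    (hS : S.Nonempty) {i : Fin n} (hi : i ∈ S) (him : i ≠ S.min' hS) :
    (π i + 1).val < i.val := by
  obtain ⟨hcard, hout, hin⟩ := hG
  obtain ⟨hPS, hPne, hmax⟩ := hin i hi
  set P := π i + 1
  have hmS : S.min' hS ∈ S := S.min'_mem hS
  have hmlt : (S.min' hS).val < i.val :=
    lt_of_le_of_ne (Fin.le_def.mp (S.min'_le i hi)) fun h => him (Fin.ext h.symm)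
  have hPv : P.val ≠ i.val := fun h => hPne (Fin.ext h)
  by_contra hc
  push_neg at hc
  have hkey := hmax _ hmS (Ne.symm him)
  rw [cwDist_eq, cwDist_eq] at hkey
  have hi1 := i.isLt; have hP1 := P.isLt
  split_ifs at hkey <;> omega

private lemma good_weakExc (hn : 2 ≤ n) {π : Equiv.Perm (Fin n)} {S : Finset (Fin n)}
    (hG : Good π S) : weakExcedences π = 2 := by
  have hG' := hG
  obtain ⟨hcard, hout, hin⟩ := hG'
  have hS : S.Nonempty := Finset.card_pos.mp (by omega)
  set m := S.min' hS with hm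
  have hmS : m ∈ S := S.min'_mem hS
  set L : Fin n := 0 - 1 with hL
  have hLval : (L : ℕ) = n - 1 := by rw [hL, sub_one_val hn]; simp
  set w := π.symm L with hw
  have hwL : π w = L := π.apply_symm_apply L
  have hiw : ∀ i : Fin n, π i = L → i = w := fun i h => by
    rw [hw, ← h, Equiv.symm_apply_apply]
  have hmw : m ≠ w := by
    intro h
    obtain ⟨hPS, hPne, -⟩ := hin m hmS
    have hP0 : π m + 1 = (0 : Fin n) := by
      rw [h, hwL, hL, sub_add_cancel]
    have h1 : m.val ≤ (π m + 1).val := Fin.le_def.mp (S.min'_le _ hPS)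
    rw [hP0] at h1
    have h2 : m.val = 0 := by simpa using h1
    exact hPne (by rw [hP0]; exact Fin.ext (by simp [h2]))
  have hfilter : Finset.univ.filter (fun i : Fin n => i ≤ π i) = {m, w} := by
    ext i
    simp only [Finset.mem_filter, Finset.mem_univ, true_and, Finset.mem_insert,
      Finset.mem_singleton]
    rw [Fin.le_def]
    constructor
    · intro hi
      by_cases hiS : i ∈ S
      · by_cases him : i = m
        · exact Or.inl him
        · right
          obtain ⟨hPS, hPne, -⟩ := hin i hiS
          have hlt : (π i + 1).val < i.val := good_P_lt hG hS hiS him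
          have hπ : π i = (π i + 1) - 1 := pi_eq rfl
          set P := π i + 1 with hP
          clear_value P
          by_cases hz : P.val = 0
          · apply hiw
            rw [hπ, hL]
            exact Fin.ext (by rw [sub_one_val hn, sub_one_val hn]; simp [hz])
          · exfalso
            have hval : (π i).val = P.val - 1 := by rw [hπ, sub_one_val hn, if_neg hz]
            have := Fin.le_def.mp hi
            omega
      · have hπ : π i = i - 1 := pi_eq (hout i hiS)
        by_cases hz : i.val = 0
        · right
          apply hiw
          rw [hπ, hL]
          exact Fin.ext (by rw [sub_one_val hn, sub_one_val hn]; simp [hz])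
        · exfalso
          have hval : (π i).val = i.val - 1 := by rw [hπ, sub_one_val hn, if_neg hz]
          have := Fin.le_def.mp hi
          omega
    · intro hi
      rcases hi with hi | hi
      · rw [hi]
        obtain ⟨hPS, hPne, -⟩ := hin m hmS
        have h1 : m.val ≤ (π m + 1).val := Fin.le_def.mp (S.min'_le _ hPS)
        have h2 : (π m + 1).val ≠ m.val := fun h => hPne (Fin.ext h)
        have hπ : π m = (π m + 1) - 1 := pi_eq rfl
        set P := π m + 1 with hP
        clear_value P
        have hz : ¬P.val = 0 := by omega
        have hval : (π m).val = P.val - 1 := by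
          rw [hπ, sub_one_val hn, if_neg hz]
        omega
      · rw [hi]
        rw [hwL, hLval]
        have := w.isLt
        omega
  rw [weakExcedences, hfilter]
  rw [Finset.card_insert_of_notMem (by simpa using hmw), Finset.card_singleton]

private lemma crossing (f : Equiv.Perm (Fin n)) (x : ℕ) :
    (Finset.univ.filter fun s : Fin n => s.val ≤ x ∧ x < (f s).val).card =
      (Finset.univ.filter fun s : Fin n => x < s.val ∧ (f s).val ≤ x).card := by
  classical
  set A : Finset (Fin n) := Finset.univ.filter (fun s => s.val ≤ x) with hA
  set B : Finset (Fin n) := Finset.univ.filter (fun s => (f s).val ≤ x) with hB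
  have hcard : A.card = B.card := by
    have himg : B.image f = A := by
      ext a
      simp only [hA, hB, Finset.mem_image, Finset.mem_filter, Finset.mem_univ, true_and]
      constructor
      · rintro ⟨b, hb, rfl⟩; exact hb
      · intro ha; exact ⟨f.symm a, by simpa using ha, f.apply_symm_apply a⟩
    rw [← himg, Finset.card_image_of_injective _ f.injective]
  have h1 : Finset.univ.filter (fun s : Fin n => s.val ≤ x ∧ x < (f s).val) = A \ B := by
    ext a
    simp only [hA, hB, Finset.mem_sdiff, Finset.mem_filter, Finset.mem_univ, true_and, not_le]
    try omega
  have h2 : Finset.univ.filter (fun s : Fin n => x < s.val ∧ (f s).val ≤ x) = B \ A := by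
    ext a
    simp only [hA, hB, Finset.mem_sdiff, Finset.mem_filter, Finset.mem_univ, true_and, not_le]
    try omega
  rw [h1, h2]
  have e1 := Finset.card_sdiff_add_card_inter A B
  have e2 := Finset.card_sdiff_add_card_inter B A
  rw [Finset.inter_comm] at e2
  omega

private lemma wexc_eq (hn : 2 ≤ n) (π : Equiv.Perm (Fin n)) :
    weakExcedences π =
      (Finset.univ.filter fun i : Fin n => i.val < (π i + 1).val).card + 1 := by
  classical
  set L : Fin n := 0 - 1 with hL
  have hLval : (L : ℕ) = n - 1 := by rw [hL, sub_one_val hn]; simp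
  set w := π.symm L with hw
  have hwL : π w = L := π.apply_symm_apply L
  have hkey : Finset.univ.filter (fun i : Fin n => i ≤ π i) =
      insert w (Finset.univ.filter fun i : Fin n => i.val < (π i + 1).val) := by
    ext i
    simp only [Finset.mem_filter, Finset.mem_univ, true_and, Finset.mem_insert]
    rw [Fin.le_def]
    constructor
    · intro hi
      by_cases hiw : i = w
      · exact Or.inl hiw
      · right
        rw [add_one_val hn]
        have hne : (π i).val ≠ n - 1 := by
          intro h
          apply hiw
          have h2 : π i = π w := by rw [hwL]; exact Fin.ext (by rw [hLval, h])
          exact π.injective h2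
        rw [if_neg hne]
        omega
    · intro hi
      rcases hi with hi | hi
      · rw [hi, hwL, hLval]
        have := w.isLt
        omega
      · rw [add_one_val hn] at hi
        split_ifs at hi with h <;> omega
  rw [weakExcedences, hkey, Finset.card_insert_of_notMem]
  simp only [Finset.mem_filter, Finset.mem_univ, true_and, not_lt]
  rw [add_one_val hn, hwL, hLval]
  simp

private lemma wexc_good (hn : 2 ≤ n) (π : Equiv.Perm (Fin n))
    (hw : weakExcedences π = 2) :
    Good π (Finset.univ.filter fun i => π i + 1 ≠ i) := by
  classical
  set τ : Equiv.Perm (Fin n) := π.trans (Equiv.addRight (1 : Fin n)) with hτ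
  have htau : ∀ i, τ i = π i + 1 := fun i => rfl
  set S : Finset (Fin n) := Finset.univ.filter (fun i => π i + 1 ≠ i) with hSdef
  have hmemS : ∀ i : Fin n, i ∈ S ↔ τ i ≠ i := by
    intro i; rw [hSdef]; simp [htau]
  have hX : (Finset.univ.filter fun i : Fin n => i.val < (τ i).val).card = 1 := by
    have := wexc_eq hn π
    rw [hw] at this
    simp only [htau] at *
    omega
  have huniq : ∀ a b : Fin n, a.val < (τ a).val → b.val < (τ b).val → a = b := by
    intro a b ha hb
    have h1 := Finset.card_le_one.mp (le_of_eq hX)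
    exact h1 a (by simp only [Finset.mem_filter, Finset.mem_univ, true_and]; exact ha)
      b (by simp only [Finset.mem_filter, Finset.mem_univ, true_and]; exact hb)
  have hclos : ∀ i : Fin n, i ∈ S → τ i ∈ S := by
    intro i hi
    rw [hmemS] at *
    exact fun hh => hi (τ.injective hh)
  obtain ⟨e, he⟩ := Finset.card_eq_one.mp hX
  have heexc : e.val < (τ e).val := by
    have h2 : e ∈ Finset.univ.filter fun i : Fin n => i.val < (τ i).val := by
      rw [he]; exact Finset.mem_singleton_self e
    simp only [Finset.mem_filter, Finset.mem_univ, true_and] at h2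
    exact h2
  have heS : e ∈ S := (hmemS e).mpr (fun h => by rw [h] at heexc; omega)
  have hcard2 : 2 ≤ S.card := by
    rw [← Nat.lt_iff_add_one_le]
    exact Finset.one_lt_card.mpr ⟨e, heS, τ e, hclos e heS, fun h => by rw [← h] at heexc; omega⟩
  have hS : S.Nonempty := ⟨e, heS⟩
  set m := S.min' hS with hm
  have hmS : m ∈ S := S.min'_mem hS
  have hmexc : m.val < (τ m).val := by
    have h1 : m ≤ τ m := S.min'_le _ (hclos m hmS)
    have h2 : τ m ≠ m := (hmemS m).mp hmS
    exact lt_of_le_of_ne (Fin.le_def.mp h1) (fun h => h2 (Fin.ext h.symm))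
  have hdec : ∀ i ∈ S, i ≠ m → (τ i).val < i.val := by
    intro i hi him
    have h2 : τ i ≠ i := (hmemS i).mp hi
    rcases Nat.lt_or_ge i.val (τ i).val with h | h
    · exact absurd (huniq i m h hmexc) him
    · exact lt_of_le_of_ne h (fun hh => h2 (Fin.ext hh))
  have claimA : ∀ t ∈ S, t.val ≤ (τ m).val := by
    intro t ht
    by_contra hc
    push_neg at hc
    have htm : t ≠ m := fun h => by rw [h] at hc; omega
    have hdt := hdec t ht htm
    have h0 : 0 < (Finset.univ.filter fun s : Fin n =>
        t.val - 1 < s.val ∧ (τ s).val ≤ t.val - 1).card := by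
      refine Finset.card_pos.mpr ⟨t, ?_⟩
      simp only [Finset.mem_filter, Finset.mem_univ, true_and]
      omega
    rw [← crossing τ (t.val - 1)] at h0
    obtain ⟨s, hs⟩ := Finset.card_pos.mp h0
    simp only [Finset.mem_filter, Finset.mem_univ, true_and] at hs
    have := huniq s m (by omega) hmexc
    rw [this] at hs
    omega
  have claimB : ∀ i ∈ S, i ≠ m → ∀ t ∈ S, ¬((τ i).val < t.val ∧ t.val < i.val) := by
    intro i hi him t ht hc
    have hdi := hdec i hi him
    have hmτ : m.val ≤ (τ i).val := Fin.le_def.mp (S.min'_le _ (hclos i hi))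
    have htm : t ≠ m := fun h => by rw [h] at hc; omega
    have hdt := hdec t ht htm
    have hti : t ≠ i := fun h => by rw [h] at hc; omega
    have hsub : ({t, i} : Finset (Fin n)) ⊆ Finset.univ.filter fun s : Fin n =>
        t.val - 1 < s.val ∧ (τ s).val ≤ t.val - 1 := by
      intro s hs
      simp only [Finset.mem_insert, Finset.mem_singleton] at hs
      rcases hs with rfl | rfl
      · simp only [Finset.mem_filter, Finset.mem_univ, true_and]; omega
      · simp only [Finset.mem_filter, Finset.mem_univ, true_and]; omega
    have hge2 : 2 ≤ (Finset.univ.filter fun s : Fin n =>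
        t.val - 1 < s.val ∧ (τ s).val ≤ t.val - 1).card := by
      calc 2 = ({t, i} : Finset (Fin n)).card := (Finset.card_pair hti).symm
      _ ≤ _ := Finset.card_le_card hsub
    rw [← crossing τ (t.val - 1)] at hge2
    have h12 : 1 < (Finset.univ.filter fun s : Fin n =>
        s.val ≤ t.val - 1 ∧ t.val - 1 < (τ s).val).card := by omega
    obtain ⟨a, ha, b, hb, hab⟩ := Finset.one_lt_card.mp h12
    simp only [Finset.mem_filter, Finset.mem_univ, true_and] at ha hb
    exact hab (huniq a b (by omega) (by omega))
  refine ⟨hcard2, ?_, ?_⟩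
  · intro i hi
    rw [hSdef] at hi
    simpa using hi
  · intro i hi
    refine ⟨by rw [← htau]; exact hclos i hi, by rw [← htau]; exact (hmemS i).mp hi, ?_⟩
    intro t ht hti
    rw [← htau]
    have hit : t.val ≠ i.val := fun h => hti (Fin.ext h)
    have h1 := t.isLt; have h2 := i.isLt; have h3 := (τ i).isLt
    by_cases him : i = m
    · rw [him] at *
      have hA := claimA t ht
      have hmt : m.val ≤ t.val := Fin.le_def.mp (S.min'_le _ ht)
      rw [cwDist_eq, cwDist_eq]
      split_ifs <;> omega
    · have hdi := hdec i hi him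
      have hB := claimB i hi him t ht
      rw [cwDist_eq, cwDist_eq]
      split_ifs <;> omega

private lemma aligned_iff (hn : 2 ≤ n) {π : Equiv.Perm (Fin n)}
    {S : Finset (Fin n)} (hG : Good π S) (i j : Fin n) :
    AlignedOrd π i j ↔ (j ∉ S ∧ i ∈ S ∧ ∀ t ∈ S, cwDist j i ≤ cwDist j t) := by
  obtain ⟨hcard, hout, hin⟩ := hG
  constructor
  · rintro ⟨c1, c2, c3, c4, c5⟩
    have hij : i ≠ j := by
      rintro rfl
      have h0 : cwDist i i = 0 := (cwDist_eq_zero_iff _ _).mpr rfl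
      rw [h0, Nat.le_zero] at c5
      exact c3 ((cwDist_eq_zero_iff _ _).mp c5).symm
    have hD0 : cwDist i j ≠ 0 := fun h => hij ((cwDist_eq_zero_iff _ _).mp h)
    have hDlt := cwDist_lt i j
    have hjS : j ∉ S := by
      intro hjS
      obtain ⟨hQS, hQne, hmaxj⟩ := hin j hjS
      set Q := π j + 1 with hQdef
      have hπj : π j = Q - 1 := pi_eq hQdef.symm
      clear_value Q
      have hQj1 : Q ≠ j + 1 := by
        intro h; apply c3; rw [hπj, h, add_sub_cancel_right]
      have hE1 : cwDist j Q ≠ 1 := by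
        intro h
        exact hQj1 (cwDist_left_cancel j Q (j + 1)
          (by rw [h, cwDist_self_add_one hn]))
      have hE0 : cwDist j Q ≠ 0 := fun h => hQne ((cwDist_eq_zero_iff _ _).mp h).symm
      have hElt := cwDist_lt j Q
      have htriQ := cwDist_triangle i j Q
      rw [hπj, cwDist_sub_one hn] at c4 c5
      by_cases hiQ : i = Q
      · rw [if_pos hiQ] at c5
        have hcomm := cwDist_comm_add i j hij
        have h1 : cwDist j Q = cwDist j i := by rw [← hiQ]
        omega
      · rw [if_neg hiQ] at c4 c5
        have hQi0 : cwDist i Q ≠ 0 := fun hh => hiQ ((cwDist_eq_zero_iff _ _).mp hh)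
        rcases htriQ with h | h
        · omega
        · by_cases hiS : i ∈ S
          · obtain ⟨hPS, hPne, hmaxi⟩ := hin i hiS
            set P := π i + 1 with hPdef
            have hπi : π i = P - 1 := pi_eq hPdef.symm
            clear_value P
            rw [hπi, cwDist_sub_one hn, if_neg (fun hh => hPne hh.symm)] at c4
            have hPi0 : cwDist i P ≠ 0 :=
              fun hh => hPne ((cwDist_eq_zero_iff _ _).mp hh).symm
            have hQni : Q ≠ i := by
              intro hh
              rw [hh] at h
              have : cwDist i i = 0 := (cwDist_eq_zero_iff _ _).mpr rfl
              omega
            have hm1 : cwDist i Q ≤ cwDist i P := hmaxi Q hQS hQni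
            have hPQ : P = Q := cwDist_left_cancel i P Q (by omega)
            have hm2 : cwDist i j ≤ cwDist i P := hmaxi j hjS (Ne.symm hij)
            rw [hPQ] at hm2
            omega
          · have hπi : π i = i - 1 := pi_eq (hout i hiS)
            rw [hπi, cwDist_sub_one hn, if_pos rfl] at c4
            omega
    have hπj : π j = j - 1 := pi_eq (hout j hjS)
    have hD1 : cwDist i j ≠ 1 := by
      intro h
      have h2 : j = i + 1 := cwDist_left_cancel i j (i + 1)
        (by rw [h, cwDist_self_add_one hn])
      apply c2
      rw [hπj, h2, add_sub_cancel_right]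
    rw [hπj, cwDist_sub_one hn, if_neg hij] at c4 c5
    have hiS : i ∈ S := by
      by_contra hiS
      have hπi : π i = i - 1 := pi_eq (hout i hiS)
      rw [hπi, cwDist_sub_one hn, if_pos rfl] at c4
      omega
    obtain ⟨hPS, hPne, hmaxi⟩ := hin i hiS
    set P := π i + 1 with hPdef
    have hπi : π i = P - 1 := pi_eq hPdef.symm
    clear_value P
    refine ⟨hjS, hiS, ?_⟩
    intro t ht
    by_cases hti : t = i
    · rw [hti]
    · rw [hπi, cwDist_sub_one hn, if_neg (fun hh => hPne hh.symm)] at c4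
      have hPi0 : cwDist i P ≠ 0 := fun hh => hPne ((cwDist_eq_zero_iff _ _).mp hh).symm
      have hm := hmaxi t ht hti
      have htri := cwDist_triangle j i t
      have hcomm := cwDist_comm_add i j hij
      have ht0 : cwDist i t ≠ 0 := fun hh => hti ((cwDist_eq_zero_iff _ _).mp hh).symm
      have htj0 : cwDist j t ≠ 0 := fun hh => hjS (((cwDist_eq_zero_iff _ _).mp hh) ▸ ht)
      have h5 := cwDist_lt j t
      have h6 := cwDist_lt i t
      omega
  · rintro ⟨hjS, hiS, hmin⟩
    obtain ⟨hPS, hPne, hmaxi⟩ := hin i hiS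
    set P := π i + 1 with hPdef
    have hπi : π i = P - 1 := pi_eq hPdef.symm
    clear_value P
    have hπj : π j = j - 1 := pi_eq (hout j hjS)
    have hij : i ≠ j := fun h => hjS (h ▸ hiS)
    have hD0 : cwDist i j ≠ 0 := fun h => hij ((cwDist_eq_zero_iff _ _).mp h)
    have hji0 : cwDist j i ≠ 0 := fun h => hij ((cwDist_eq_zero_iff _ _).mp h).symm
    have hcomm := cwDist_comm_add i j hij
    have hDlt := cwDist_lt i j
    have c3 : π j ≠ j := by rw [hπj]; exact sub_one_ne hn j
    have c2 : π j ≠ i := by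
      rw [hπj]; intro h
      have h1 : cwDist j i = n - 1 := by
        rw [← h, cwDist_sub_one hn, if_pos rfl]
      obtain ⟨t, ht, hti⟩ := Finset.exists_mem_ne (show 1 < S.card by omega) i
      have h2 := hmin t ht
      have h3 := cwDist_lt j t
      have h4 : cwDist j t = cwDist j i := by omega
      exact hti (cwDist_left_cancel j t i h4)
    have c1 : π i ≠ j := by
      intro h
      have hP : P = j + 1 := by rw [hPdef, h]
      have h1 : cwDist j P = 1 := by rw [hP, cwDist_self_add_one hn]
      have h2 := hmin P hPS
      exact hPne (cwDist_left_cancel j P i (by omega))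
    have hπjv : cwDist i (π j) = cwDist i j - 1 := by
      rw [hπj, cwDist_sub_one hn, if_neg hij]
    have hPi0 : cwDist i P ≠ 0 := fun hh => hPne ((cwDist_eq_zero_iff _ _).mp hh).symm
    have hπiv : cwDist i (π i) = cwDist i P - 1 := by
      rw [hπi, cwDist_sub_one hn, if_neg (fun hh => hPne hh.symm)]
    have hPD : cwDist i P ≤ cwDist i j := by
      have htri := cwDist_triangle i j P
      have hminP := hmin P hPS
      have h1 := cwDist_lt j P
      have h2 := cwDist_lt i P
      omega
    exact ⟨c1, c2, c3, by omega, by omega⟩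

private lemma good_alignments (hn : 2 ≤ n) {π : Equiv.Perm (Fin n)}
    {S : Finset (Fin n)} (hG : Good π S) : alignments π = n - S.card := by
  classical
  have hS : S.Nonempty := Finset.card_pos.mp (by have := hG.1; omega)
  have key : (Finset.univ.filter fun p : Fin n × Fin n => AlignedOrd π p.1 p.2).card
      = Sᶜ.card := by
    apply Finset.card_bij (fun (p : Fin n × Fin n) _ => p.2)
    · intro p hp
      rw [Finset.mem_filter] at hp
      exact Finset.mem_compl.mpr ((aligned_iff hn hG p.1 p.2).mp hp.2).1
    · intro p hp q hq heq
      rw [Finset.mem_filter] at hp hq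
      obtain ⟨-, hp2⟩ := hp
      obtain ⟨-, hq2⟩ := hq
      rw [aligned_iff hn hG] at hp2 hq2
      obtain ⟨hjp, hip, hminp⟩ := hp2
      obtain ⟨hjq, hiq, hminq⟩ := hq2
      have h1 : cwDist p.2 p.1 ≤ cwDist p.2 q.1 := hminp q.1 hiq
      have h2 : cwDist q.2 q.1 ≤ cwDist q.2 p.1 := hminq p.1 hip
      rw [heq] at h1 hminp
      have h3 : cwDist q.2 p.1 = cwDist q.2 q.1 := le_antisymm h1 h2
      have := cwDist_left_cancel q.2 p.1 q.1 h3
      exact Prod.ext this heq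
    · intro j hj
      obtain ⟨i0, hi0, hmin0⟩ := Finset.exists_min_image S (cwDist j) hS
      refine ⟨(i0, j), ?_, rfl⟩
      rw [Finset.mem_filter]
      exact ⟨Finset.mem_univ _, (aligned_iff hn hG i0 j).mpr
        ⟨Finset.mem_compl.mp hj, hi0, hmin0⟩⟩
  rw [alignments, key, Finset.card_compl, Fintype.card_fin]

private lemma good_filter_eq {π : Equiv.Perm (Fin n)} {S : Finset (Fin n)}
    (hG : Good π S) : Finset.univ.filter (fun i => π i + 1 ≠ i) = S := by
  obtain ⟨hcard, hout, hin⟩ := hG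
  ext i
  simp only [Finset.mem_filter, Finset.mem_univ, true_and]
  constructor
  · intro h
    by_contra hiS
    exact h (hout i hiS)
  · intro h
    exact (hin i h).2.1

private lemma good_unique {π₁ π₂ : Equiv.Perm (Fin n)} {S : Finset (Fin n)}
    (h1 : Good π₁ S) (h2 : Good π₂ S) : π₁ = π₂ := by
  obtain ⟨-, hout1, hin1⟩ := h1
  obtain ⟨-, hout2, hin2⟩ := h2
  apply Equiv.ext
  intro i
  have key : π₁ i + 1 = π₂ i + 1 := by
    by_cases hiS : i ∈ S
    · obtain ⟨hPS1, hPne1, hmax1⟩ := hin1 i hiS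
      obtain ⟨hPS2, hPne2, hmax2⟩ := hin2 i hiS
      have ha := hmax1 _ hPS2 hPne2
      have hb := hmax2 _ hPS1 hPne1
      exact (cwDist_left_cancel i _ _ (le_antisymm hb ha)).symm
        |>.symm
    · rw [hout1 i hiS, hout2 i hiS]
  have := congrArg (· - 1) key
  simpa [add_sub_cancel_right] using this

end TwoExcAux

section TwoExcConstruction

variable {n : ℕ}

private def tauFun (S : Finset (Fin n)) (hS : S.Nonempty) (i : Fin n) : Fin n :=
  if i ∈ S then
    if h : (S.filter (fun x => x < i)).Nonempty then (S.filter (fun x => x < i)).max' h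
    else S.max' hS
  else i

private def rhoFun (S : Finset (Fin n)) (hS : S.Nonempty) (i : Fin n) : Fin n :=
  if i ∈ S then
    if h : (S.filter (fun x => i < x)).Nonempty then (S.filter (fun x => i < x)).min' h
    else S.min' hS
  else i

private lemma tauFun_mem {S : Finset (Fin n)} (hS : S.Nonempty) {i : Fin n} (hi : i ∈ S) :
    tauFun S hS i ∈ S := by
  rw [tauFun, if_pos hi]
  split_ifs with h
  · exact (Finset.mem_filter.mp ((S.filter (fun x => x < i)).max'_mem h)).1
  · exact S.max'_mem hS

private lemma rho_tau {S : Finset (Fin n)} (hS : S.Nonempty) (i : Fin n) :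
    rhoFun S hS (tauFun S hS i) = i := by
  by_cases hi : i ∈ S
  · rw [tauFun, if_pos hi]
    split_ifs with h
    · set J := (S.filter (fun x => x < i)).max' h with hJ
      have hJmem := (S.filter (fun x => x < i)).max'_mem h
      rw [← hJ] at hJmem
      rw [Finset.mem_filter] at hJmem
      obtain ⟨hJS, hJlt⟩ := hJmem
      rw [rhoFun, if_pos hJS]
      have hup : (S.filter (fun x => J < x)).Nonempty := ⟨i, by
        rw [Finset.mem_filter]; exact ⟨hi, hJlt⟩⟩
      rw [dif_pos hup]
      apply le_antisymm
      · exact (S.filter (fun x => J < x)).min'_le i (by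
          rw [Finset.mem_filter]; exact ⟨hi, hJlt⟩)
      · by_contra hc
        push_neg at hc
        set m := (S.filter (fun x => J < x)).min' hup with hm
        have hmmem := (S.filter (fun x => J < x)).min'_mem hup
        rw [← hm, Finset.mem_filter] at hmmem
        obtain ⟨hmS, hJm⟩ := hmmem
        have : m ≤ J := (S.filter (fun x => x < i)).le_max' m (by
          rw [Finset.mem_filter]; exact ⟨hmS, hc⟩)
        exact absurd hJm (not_lt.mpr this)
    · set M := S.max' hS with hM
      have hMS : M ∈ S := S.max'_mem hS
      rw [rhoFun, if_pos hMS]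
      have hup : ¬(S.filter (fun x => M < x)).Nonempty := by
        intro hc
        obtain ⟨x, hx⟩ := hc
        rw [Finset.mem_filter] at hx
        exact absurd (S.le_max' x hx.1) (not_le.mpr hx.2)
      rw [dif_neg hup]
      apply le_antisymm
      · exact S.min'_le i hi
      · by_contra hc
        push_neg at hc
        exact h ⟨S.min' hS, by rw [Finset.mem_filter]; exact ⟨S.min'_mem hS, hc⟩⟩
  · rw [tauFun, if_neg hi, rhoFun, if_neg hi]

private lemma tauFun_bij {S : Finset (Fin n)} (hS : S.Nonempty) :
    Function.Bijective (tauFun S hS) := by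
  have hinj : Function.Injective (tauFun S hS) := by
    intro a b hab
    have := congrArg (rhoFun S hS) hab
    rwa [rho_tau, rho_tau] at this
  exact ⟨hinj, Finite.surjective_of_injective hinj⟩

variable [NeZero n]

private noncomputable def sigmaPerm (S : Finset (Fin n)) (hS : S.Nonempty) :
    Equiv.Perm (Fin n) :=
  (Equiv.ofBijective (tauFun S hS) (tauFun_bij hS)).trans (Equiv.subRight (1 : Fin n))

private lemma sigmaPerm_apply (S : Finset (Fin n)) (hS : S.Nonempty) (i : Fin n) :
    sigmaPerm S hS i = tauFun S hS i - 1 := rfl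

private lemma sigmaPerm_add_one (S : Finset (Fin n)) (hS : S.Nonempty) (i : Fin n) :
    sigmaPerm S hS i + 1 = tauFun S hS i := by
  rw [sigmaPerm_apply, sub_add_cancel]

private lemma good_sigma (hn : 2 ≤ n) (S : Finset (Fin n)) (hcard : 2 ≤ S.card) :
    Good (sigmaPerm S (Finset.card_pos.mp (by omega))) S := by
  set hS : S.Nonempty := Finset.card_pos.mp (by omega) with hSdef
  refine ⟨hcard, ?_, ?_⟩
  · intro i hi
    rw [sigmaPerm_add_one, tauFun, if_neg hi]
  · intro i hi
    rw [sigmaPerm_add_one]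
    refine ⟨tauFun_mem hS hi, ?_, ?_⟩
    · rw [tauFun, if_pos hi]
      split_ifs with h
      · intro hc
        have := (S.filter (fun x => x < i)).max'_mem h
        rw [hc, Finset.mem_filter] at this
        exact absurd this.2 (lt_irrefl i)
      · intro hc
        obtain ⟨t, ht, hti⟩ := Finset.exists_mem_ne (show 1 < S.card by omega) i
        rcases lt_or_gt_of_ne hti with h1 | h1
        · exact h ⟨t, by rw [Finset.mem_filter]; exact ⟨ht, h1⟩⟩
        · have := S.le_max' t ht
          rw [hc] at this
          exact absurd h1 (not_lt.mpr this)
    · intro t ht hti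
      have htv : t.val ≠ i.val := fun hh => hti (Fin.ext hh)
      have h1 := t.isLt; have h2 := i.isLt
      rw [tauFun, if_pos hi]
      split_ifs with h
      · set J := (S.filter (fun x => x < i)).max' h with hJ
        have hJmem := (S.filter (fun x => x < i)).max'_mem h
        rw [← hJ, Finset.mem_filter] at hJmem
        have hJlt : J.val < i.val := hJmem.2
        have h3 : t.val < i.val → t.val ≤ J.val := by
          intro hh
          exact Fin.le_def.mp ((S.filter (fun x => x < i)).le_max' t (by
            rw [Finset.mem_filter]; exact ⟨ht, Fin.lt_def.mpr hh⟩))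
        rw [cwDist_eq, cwDist_eq]
        have h4 := J.isLt
        split_ifs <;> omega
      · have hmin : ∀ x ∈ S, i ≤ x := by
          intro x hx
          by_contra hc
          exact h ⟨x, by rw [Finset.mem_filter]; exact ⟨hx, not_le.mp hc⟩⟩
        set M := S.max' hS with hM
        have hMS : M ∈ S := S.max'_mem hS
        have h5 : t.val ≤ M.val := Fin.le_def.mp (S.le_max' t ht)
        have h6 : i.val ≤ t.val := Fin.le_def.mp (hmin t ht)
        have h7 : i.val ≤ M.val := Fin.le_def.mp (hmin M hMS)
        have h8 := M.isLt
        rw [cwDist_eq, cwDist_eq]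
        split_ifs <;> omega

end TwoExcConstruction

/-- The number of permutations of `{1,…,n}` with exactly `2` weak excedences and exactly
`ℓ` alignments equals `C(n, n−ℓ)` for `0 ≤ ℓ ≤ n−2`. -/
theorem two_excedence_alignment_count (n ℓ : ℕ) (hn : 2 ≤ n) (hl : ℓ ≤ n - 2) :
    Nat.card {π : Equiv.Perm (Fin n) // weakExcedences π = 2 ∧ alignments π = ℓ} =
      n.choose (n - ℓ) := by
  haveI : NeZero n := ⟨by omega⟩
  classical
  rw [Nat.card_eq_fintype_card, Fintype.card_subtype]
  have hpc : ((Finset.univ : Finset (Fin n)).powersetCard (n - ℓ)).card = n.choose (n - ℓ) := by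
    rw [Finset.card_powersetCard, Finset.card_univ, Fintype.card_fin]
  rw [← hpc]
  apply Finset.card_bij
    (fun (π : Equiv.Perm (Fin n)) _ => Finset.univ.filter (fun i => π i + 1 ≠ i))
  · intro π hπ
    rw [Finset.mem_filter] at hπ
    obtain ⟨-, hw, ha⟩ := hπ
    have hG := wexc_good hn π hw
    have h2 := hG.1
    have h3 : alignments π = n - (Finset.univ.filter (fun i => π i + 1 ≠ i)).card :=
      good_alignments hn hG
    have h4 : (Finset.univ.filter (fun i => π i + 1 ≠ i)).card ≤ n := by
      have := Finset.card_le_univ (Finset.univ.filter (fun i => π i + 1 ≠ i))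
      rwa [Fintype.card_fin] at this
    rw [Finset.mem_powersetCard]
    exact ⟨Finset.subset_univ _, by omega⟩
  · intro π1 h1 π2 h2 heq
    rw [Finset.mem_filter] at h1 h2
    have hG1 := wexc_good hn π1 h1.2.1
    have hG2 := wexc_good hn π2 h2.2.1
    rw [heq] at hG1
    exact good_unique hG1 hG2
  · intro T hT
    rw [Finset.mem_powersetCard] at hT
    obtain ⟨-, hTcard⟩ := hT
    have hc2 : 2 ≤ T.card := by omega
    have hG := good_sigma hn T hc2
    refine ⟨sigmaPerm T (Finset.card_pos.mp (by omega)), ?_, good_filter_eq hG⟩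
    rw [Finset.mem_filter]
    refine ⟨Finset.mem_univ _, good_weakExc hn hG, ?_⟩
    rw [good_alignments hn hG, hTcard]
    omega
end

section
/- Substituting q = −1 into E_{k,n}(q) = q^{n−k²} ∑_{i=0}^{k−1} (−1)^i [k−i]^n q^{ki−k} (C(n,i) q^{k−i} + C(n,i−1)) yields ± C(n−1, k−1), where [m] = 1 + q + ... + q^{m−1}. -/
/-!
At `q = -1` the bracket `[k - i]` is `0` for `k - i` even and `1` for `k - i` odd, so (as `n ≥ 1`)
only the terms with `k - i` odd survive, and for those the signs combine to leave
`C(n, i) - C(n, i - 1)`. By Pascal's rule this is `C(n - 1, i) - C(n - 1, i - 2)`, and summing over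
`i = k - 1, k - 3, …` telescopes to `C(n - 1, k - 1)`.
-/

open Finset

theorem sum_range_succ_ite_odd_choose_sub {R : Type*} [Ring R] (n : ℕ) :
    ∀ k : ℕ, ∑ i ∈ range (k + 1),
      (if Odd (k + 1 - i) then
        ((n + 1).choose i : R) - (if i = 0 then 0 else ((n + 1).choose (i - 1) : R)) else 0) =
      n.choose k
  | 0 => by simp
  | 1 => by simp [sum_range_succ]
  | k + 2 => by
    have hshift : ∀ i ∈ range (k + 1), Odd (k + 2 + 1 - i) ↔ Odd (k + 1 - i) := fun i hi => by
      rw [show k + 2 + 1 - i = k + 1 - i + 2 by grind]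
      simp [Nat.odd_add]
    rw [sum_range_succ, sum_range_succ, sum_congr rfl fun i hi => if_congr (hshift i hi) rfl rfl,
      sum_range_succ_ite_odd_choose_sub n k]
    have hpascal : ((n + 1).choose (k + 2) : R) - (n + 1).choose (k + 1) =
        n.choose (k + 2) - n.choose k := by
      simp only [Nat.choose_succ_succ' n (k + 1), Nat.choose_succ_succ' n k, Nat.cast_add]
      abel
    simp [hpascal, show ¬ Odd 2 by decide]

theorem Int.odd_add_mul_sub_of_odd_sub {k i : ℤ} (h : Odd (k - i)) : Odd (i + (k * i - k)) := by
  simp only [← Int.not_even_iff_odd, Int.even_sub, Int.even_add, Int.even_mul] at h ⊢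
  tauto

theorem E_kn_term_at_neg_one {R : Type*} [DivisionRing R] {n k i : ℕ} (hn : n ≠ 0) (hik : i ≤ k)
    (a b : R) :
    (-1 : R) ^ i * (∑ t ∈ range (k - i), (-1 : R) ^ t) ^ n * (-1) ^ ((k : ℤ) * i - k) *
        (a * (-1) ^ ((k : ℤ) - i) + b) =
      if Odd (k - i) then a - b else 0 := by
  rw [neg_one_geom_sum]
  rcases Nat.even_or_odd (k - i) with heven | hodd
  · simp [heven, zero_pow hn, Nat.not_odd_iff_even.mpr heven]
  · rw [if_neg (Nat.not_even_iff_odd.mpr hodd), if_pos hodd]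
    have hodd_int : Odd ((k : ℤ) - i) := by rw [← Nat.cast_sub hik]; exact_mod_cast hodd
    rw [one_pow, mul_one, ← zpow_natCast, ← zpow_add₀ (by norm_num),
      (Int.odd_add_mul_sub_of_odd_sub hodd_int).neg_one_zpow, hodd_int.neg_one_zpow]
    noncomm_ring

theorem E_kn_sum_at_neg_one {R : Type*} [DivisionRing R] {n k : ℕ} (hn : n ≠ 0) (hk : k ≠ 0) :
    ∑ i ∈ range k,
        (-1 : R) ^ i * (∑ t ∈ range (k - i), (-1 : R) ^ t) ^ n * (-1) ^ ((k : ℤ) * i - k) *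
          ((n.choose i : R) * (-1) ^ ((k : ℤ) - i) +
            (if i = 0 then 0 else ((n.choose (i - 1) : ℕ) : R))) =
      ((n - 1).choose (k - 1) : R) := by
  obtain ⟨m, rfl⟩ := Nat.exists_eq_succ_of_ne_zero hn
  obtain ⟨j, rfl⟩ := Nat.exists_eq_succ_of_ne_zero hk
  rw [Nat.succ_sub_one, Nat.succ_sub_one, ← sum_range_succ_ite_odd_choose_sub m j]
  exact sum_congr rfl fun i hi => E_kn_term_at_neg_one hn (mem_range.mp hi).le _ _

/-- Substituting `q = −1` into
`E_{k,n}(q) = q^{n−k²} ∑_{i=0}^{k−1} (−1)^i [k−i]^n q^{ki−k} (C(n,i) q^{k−i} + C(n,i−1))`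
(where `[m] = 1 + q + ⋯ + q^{m−1}` and `C(n,−1) = 0`) yields `± C(n−1, k−1)`. -/
theorem E_kn_at_neg_one (n k : ℕ) (hk : 1 ≤ k) (hkn : k ≤ n) :
    (-1 : ℚ) ^ ((n : ℤ) - (k : ℤ) ^ 2) *
        ∑ i ∈ Finset.range k,
          (-1 : ℚ) ^ i * (∑ t ∈ Finset.range (k - i), (-1 : ℚ) ^ t) ^ n *
            (-1 : ℚ) ^ ((k : ℤ) * i - k) *
            ((n.choose i : ℚ) * (-1 : ℚ) ^ ((k : ℤ) - i) +
              (if i = 0 then 0 else ((n.choose (i - 1) : ℕ) : ℚ))) =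
      ((n - 1).choose (k - 1) : ℚ) ∨
    (-1 : ℚ) ^ ((n : ℤ) - (k : ℤ) ^ 2) *
        ∑ i ∈ Finset.range k,
          (-1 : ℚ) ^ i * (∑ t ∈ Finset.range (k - i), (-1 : ℚ) ^ t) ^ n *
            (-1 : ℚ) ^ ((k : ℤ) * i - k) *
            ((n.choose i : ℚ) * (-1 : ℚ) ^ ((k : ℤ) - i) +
              (if i = 0 then 0 else ((n.choose (i - 1) : ℕ) : ℚ))) =
      -((n - 1).choose (k - 1) : ℚ) := by
  rw [E_kn_sum_at_neg_one (by omega) (by omega)]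
  rcases Int.even_or_odd ((n : ℤ) - (k : ℤ) ^ 2) with h | h
  · exact Or.inl (by rw [h.neg_one_zpow, one_mul])
  · exact Or.inr (by rw [h.neg_one_zpow, neg_one_mul])
end
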